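/- arXiv:1104.4752 — 12 statements merged into one kernel-verified Lean document; each statement's English description precedes it below -/
import Mathlib

section
/- Let k be an infinite field. Then every proper T-space of k[x]_0 is contained in Z; that is, if V is a T-space of k[x]_0 with x ∉ V, then every p ∈ V satisfies p.coeff 0 = 0 and p.coeff 1 = 0. -/
/-- A T-space of `k[x]₀`: a `k`-submodule of `k[x]` all of whose elements have zero
constant term, closed under substitution `p ↦ p ∘ g` for every polynomial `g` with
zero constant term. -/
def IsTSpace (k : Type*) [Field k] (V : Submodule k (Polynomial k)) : Prop :=
  (∀ p ∈ V, p.coeff 0 = 0) ∧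
    ∀ p ∈ V, ∀ g : Polynomial k, g.coeff 0 = 0 → p.comp g ∈ V

/-- The T-space of `k[x]₀` generated by a set `S`. -/
noncomputable def TSpaceGen (k : Type*) [Field k] (S : Set (Polynomial k)) : Submodule k (Polynomial k) :=
  sInf {V | IsTSpace k V ∧ S ⊆ (V : Set (Polynomial k))}

/-- A T-ideal of `k[x]₀`: a T-space closed under multiplication by polynomials with
zero constant term. -/
def IsTIdeal (k : Type*) [Field k] (V : Submodule k (Polynomial k)) : Prop :=
  IsTSpace k V ∧ ∀ p ∈ V, ∀ g : Polynomial k, g.coeff 0 = 0 → p * g ∈ V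

/-- The T-ideal of `k[x]₀` generated by a set `S`. -/
noncomputable def TIdealGen (k : Type*) [Field k] (S : Set (Polynomial k)) : Submodule k (Polynomial k) :=
  sInf {V | IsTIdeal k V ∧ S ⊆ (V : Set (Polynomial k))}

open Polynomial

lemma exists_pow_ne_pow {R : Type*} [CommRing R] [IsDomain R] [Infinite R] {i j : ℕ}
    (hij : i ≠ j) : ∃ c : R, c ^ i ≠ c ^ j := by
  by_contra! h
  have hX : (X ^ i : R[X]) = X ^ j := Polynomial.funext fun c => by simpa using h c
  exact hij (by simpa using congrArg natDegree hX)

lemma eq_monomial_of_support_subset_singleton {R : Type*} [Semiring R] {p : R[X]} {i : ℕ}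
    (h : p.support ⊆ {i}) : p = monomial i (p.coeff i) := by
  ext n
  rw [coeff_monomial]
  split_ifs with hn
  · rw [hn]
  · exact notMem_support_iff.1 fun hmem => hn (Finset.mem_singleton.1 (h hmem)).symm

section Dilation

variable {R : Type*} [CommRing R]

lemma coeff_comp_C_mul_X_sub_smul (p : R[X]) (c : R) (j m : ℕ) :
    (p.comp (C c * X) - c ^ j • p).coeff m = (c ^ m - c ^ j) * p.coeff m := by
  simp only [coeff_sub, comp_C_mul_X_coeff, coeff_smul, smul_eq_mul]
  ring

lemma support_comp_C_mul_X_sub_smul_subset (p : R[X]) (c : R) (j : ℕ) :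
    (p.comp (C c * X) - c ^ j • p).support ⊆ p.support.erase j := by
  intro m hm
  rw [mem_support_iff, coeff_comp_C_mul_X_sub_smul] at hm
  refine Finset.mem_erase.2 ⟨fun hmj => hm ?_, mem_support_iff.2 (right_ne_zero_of_mul hm)⟩
  rw [hmj, sub_self, zero_mul]

end Dilation

/-- `p(c x) - c ^ j • p` loses the monomial `x ^ j` of `p` and keeps `x ^ i` when `c ^ i ≠ c ^ j`;
over an infinite field such a `c` exists, so repeating this isolates `x ^ i`. -/
theorem X_pow_mem_of_coeff_ne_zero {k : Type*} [Field k] [Infinite k] {V : Submodule k k[X]}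
    (hV : ∀ c : k, ∀ p ∈ V, p.comp (C c * X) ∈ V) {p : k[X]} (hp : p ∈ V) {i : ℕ}
    (hi : p.coeff i ≠ 0) : X ^ i ∈ V := by
  induction hn : p.support.card using Nat.strong_induction_on generalizing p with
  | _ n ih =>
    by_cases hsub : p.support ⊆ {i}
    · have hmono : p = C (p.coeff i) * X ^ i := by
        rw [C_mul_X_pow_eq_monomial]
        exact eq_monomial_of_support_subset_singleton hsub
      have : (p.coeff i)⁻¹ • p = X ^ i := by
        rw [smul_eq_C_mul]
        nth_rw 2 [hmono]
        rw [← mul_assoc, ← C_mul, inv_mul_cancel₀ hi, C_1, one_mul]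
      exact this ▸ V.smul_mem _ hp
    · obtain ⟨j, hj, hji⟩ := Finset.not_subset.1 hsub
      obtain ⟨c, hc⟩ := exists_pow_ne_pow (R := k) (Ne.symm (Finset.notMem_singleton.1 hji))
      set q := p.comp (C c * X) - c ^ j • p
      have hqV : q ∈ V := V.sub_mem (hV c p hp) (V.smul_mem _ hp)
      have hqi : q.coeff i ≠ 0 := by
        rw [coeff_comp_C_mul_X_sub_smul]
        exact mul_ne_zero (sub_ne_zero.2 hc) hi
      have hcard : q.support.card < n := by
        rw [← hn]
        calc q.support.card ≤ (p.support.erase j).card :=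
              Finset.card_le_card (support_comp_C_mul_X_sub_smul_subset p c j)
          _ < p.support.card := Finset.card_erase_lt_of_mem hj
      exact ih _ hcard hqV hqi rfl

lemma IsTSpace.comp_C_mul_X_mem {k : Type*} [Field k] {V : Submodule k k[X]}
    (hV : IsTSpace k V) (c : k) {p : k[X]} (hp : p ∈ V) : p.comp (C c * X) ∈ V :=
  hV.2 p hp _ (by simp)

/-- If `k` is infinite, every proper T-space of `k[x]₀` is contained in `Z`. -/
theorem proper_TSpace_le_Z (k : Type*) [Field k] [Infinite k]
    (V : Submodule k (Polynomial k)) (hV : IsTSpace k V) (hx : Polynomial.X ∉ V) :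
    ∀ p ∈ V, p.coeff 0 = 0 ∧ p.coeff 1 = 0 := by
  intro p hp
  refine ⟨hV.1 p hp, ?_⟩
  by_contra h1
  have hX : X ^ 1 ∈ V := X_pow_mem_of_coeff_ne_zero (fun c _ => hV.comp_C_mul_X_mem c) hp h1
  exact hx (by rwa [pow_one] at hX)
end

section
/- Let k be a finite field. Then Z, the set of all polynomials p over k with p.coeff 0 = 0 and p.coeff 1 = 0, is a maximal T-space of k[x]_0: Z is a proper T-space, and every T-space of k[x]_0 that properly contains Z contains x. -/
/-- `Z`: the set of polynomials with zero constant and zero linear coefficient,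
as a `k`-submodule of `k[x]`. -/
def Zspace (k : Type*) [Field k] : Submodule k (Polynomial k) where
  carrier := {p : Polynomial k | p.coeff 0 = 0 ∧ p.coeff 1 = 0}
  add_mem' := fun ha hb => by
    simp only [Set.mem_setOf_eq, Polynomial.coeff_add] at *
    exact ⟨by rw [ha.1, hb.1, add_zero], by rw [ha.2, hb.2, add_zero]⟩
  zero_mem' := by simp
  smul_mem' := fun c p hp => by
    simp only [Set.mem_setOf_eq, Polynomial.coeff_smul] at *
    exact ⟨by rw [hp.1, smul_zero], by rw [hp.2, smul_zero]⟩

/-!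
Substituting a `g` without constant term multiplies the linear coefficient by `g.coeff 1`
(chain rule at `0`), so `Z` is a T-space. Conversely, any `p` with zero constant term differs
from `(p.coeff 1) • X` by an element of `Z`; a submodule containing `Z` together with some `p`
having `p.coeff 1 ≠ 0` therefore contains `X`.
-/

open Polynomial

namespace Polynomial

variable {R : Type*} [CommSemiring R]

theorem coeff_zero_comp_of_coeff_zero_eq_zero {p g : R[X]} (hg : g.coeff 0 = 0) :
    (p.comp g).coeff 0 = p.coeff 0 := by
  rw [coeff_zero_eq_eval_zero, eval_comp, ← coeff_zero_eq_eval_zero, hg,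
    ← coeff_zero_eq_eval_zero]

theorem coeff_one_eq_eval_zero_derivative (p : R[X]) : p.coeff 1 = (derivative p).eval 0 := by
  rw [← coeff_zero_eq_eval_zero, coeff_derivative]
  simp

theorem coeff_one_comp_of_coeff_zero_eq_zero {p g : R[X]} (hg : g.coeff 0 = 0) :
    (p.comp g).coeff 1 = p.coeff 1 * g.coeff 1 := by
  simp only [coeff_one_eq_eval_zero_derivative, derivative_comp, eval_mul, eval_comp]
  rw [← coeff_zero_eq_eval_zero g, hg, mul_comm]

end Polynomial

section Zspace

variable {k : Type*} [Field k]

theorem mem_Zspace {p : k[X]} : p ∈ Zspace k ↔ p.coeff 0 = 0 ∧ p.coeff 1 = 0 := Iff.rfl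

theorem isTSpace_Zspace : IsTSpace k (Zspace k) := by
  refine ⟨fun p hp => (mem_Zspace.1 hp).1, fun p hp g hg => ?_⟩
  obtain ⟨hp0, hp1⟩ := mem_Zspace.1 hp
  rw [mem_Zspace, coeff_zero_comp_of_coeff_zero_eq_zero hg,
    coeff_one_comp_of_coeff_zero_eq_zero hg, hp0, hp1, zero_mul]
  exact ⟨rfl, rfl⟩

theorem X_notMem_Zspace : (X : k[X]) ∉ Zspace k := by
  simp [mem_Zspace]

theorem sub_coeff_one_smul_X_mem_Zspace {p : k[X]} (hp : p.coeff 0 = 0) :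
    p - p.coeff 1 • X ∈ Zspace k :=
  mem_Zspace.2 ⟨by simp [hp], by simp⟩

theorem X_mem_of_Zspace_lt {U : Submodule k k[X]} (hU : ∀ p ∈ U, p.coeff 0 = 0)
    (hlt : Zspace k < U) : X ∈ U := by
  obtain ⟨p, hpU, hpZ⟩ := SetLike.exists_of_lt hlt
  have hp0 : p.coeff 0 = 0 := hU p hpU
  have hp1 : p.coeff 1 ≠ 0 := fun hp1 => hpZ (mem_Zspace.2 ⟨hp0, hp1⟩)
  have hcX : p.coeff 1 • X ∈ U := by
    simpa using U.sub_mem hpU (hlt.le (sub_coeff_one_smul_X_mem_Zspace hp0))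
  simpa [smul_smul, inv_mul_cancel₀ hp1] using U.smul_mem (p.coeff 1)⁻¹ hcX

end Zspace

theorem Zspace_isMaximal_general (k : Type*) [Field k] :
    IsTSpace k (Zspace k) ∧ Polynomial.X ∉ Zspace k ∧
      ∀ U : Submodule k (Polynomial k), IsTSpace k U → Zspace k < U → Polynomial.X ∈ U :=
  ⟨isTSpace_Zspace, X_notMem_Zspace, fun _ hU hlt => X_mem_of_Zspace_lt hU.1 hlt⟩

/-- If `k` is a finite field, then `Z` is a maximal T-space of `k[x]₀`. -/
theorem Zspace_isMaximal (k : Type*) [Field k] [Fintype k] :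
    IsTSpace k (Zspace k) ∧ Polynomial.X ∉ Zspace k ∧
      ∀ U : Submodule k (Polynomial k), IsTSpace k U → Zspace k < U → Polynomial.X ∈ U :=
  Zspace_isMaximal_general k
end

section
/- Let k be a finite field with q elements. Then W_0, the T-ideal of k[x]_0 generated by x − x^q, is a maximal T-space of k[x]_0: W_0 is a proper T-space, and every T-space of k[x]_0 that properly contains W_0 contains x. -/
/-!
Over `k = 𝔽_q` the polynomial `X ^ q - X = ∏ a, (X - a)` generates, as an ideal, exactly the
polynomials vanishing on all of `k`; this ideal is already a T-ideal, so it is `W₀`. If a T-space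
`U` contains some `p` with `p a ≠ 0`, then `p ∘ (a X ^ (q - 1))` agrees with `p a • X ^ (q - 1)` as
a function on `k`, so `X ^ (q - 1) ∈ U`. Substituting into it the indicator polynomials
`δ_b = 1 - (X - b) ^ (q - 1)` of the points `b ≠ 0` puts functions equal to `δ_b` into `U`, and `X`
agrees with `∑ b, b • δ_b` as a function on `k`.
-/

open Polynomial

noncomputable def vanishingSubmodule (k : Type*) [Field k] : Submodule k k[X] :=
  ⨅ a : k, LinearMap.ker (leval a)

section TSpace

variable {k : Type*} [Field k]

theorem mem_vanishingSubmodule {p : k[X]} : p ∈ vanishingSubmodule k ↔ ∀ a, p.eval a = 0 := by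
  simp [vanishingSubmodule]

theorem isTIdeal_vanishingSubmodule : IsTIdeal k (vanishingSubmodule k) := by
  simp only [IsTIdeal, IsTSpace, mem_vanishingSubmodule]
  refine ⟨⟨fun p hp => ?_, fun p hp g _ a => ?_⟩, fun p hp g _ a => ?_⟩
  · rw [coeff_zero_eq_eval_zero, hp]
  · rw [eval_comp, hp]
  · rw [eval_mul, hp, zero_mul]

theorem IsTIdeal.mul_mem {V : Submodule k k[X]} (hV : IsTIdeal k V) {r : k[X]} (hr : r ∈ V)
    (h : k[X]) : r * h ∈ V := by
  have hsplit : r * h = h.coeff 0 • r + r * (h - C (h.coeff 0)) := by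
    rw [smul_eq_C_mul]; ring
  rw [hsplit]
  exact V.add_mem (V.smul_mem _ hr) (hV.2 r hr _ (by simp))

theorem subset_tIdealGen (S : Set k[X]) : S ⊆ TIdealGen k S :=
  fun _ hp => Submodule.mem_sInf.2 fun _ hV => hV.2 hp

theorem tIdealGen_le {S : Set k[X]} {V : Submodule k k[X]} (hV : IsTIdeal k V) (hS : S ⊆ V) :
    TIdealGen k S ≤ V :=
  sInf_le ⟨hV, hS⟩

theorem mul_mem_tIdealGen {S : Set k[X]} {r : k[X]} (hr : r ∈ TIdealGen k S) (h : k[X]) :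
    r * h ∈ TIdealGen k S :=
  Submodule.mem_sInf.2 fun V hV => hV.1.mul_mem (Submodule.mem_sInf.1 hr V hV) h

theorem mem_of_forall_eval_eq {U : Submodule k k[X]} (hU : vanishingSubmodule k ≤ U)
    {p r : k[X]} (hp : p ∈ U) (hpr : ∀ t, r.eval t = p.eval t) : r ∈ U := by
  have hdiff : r - p ∈ U := hU (mem_vanishingSubmodule.2 fun t => by simp [hpr])
  simpa using U.add_mem hdiff hp

end TSpace

namespace FiniteField

variable {K : Type*} [Field K] [Fintype K]

theorem pow_card_sub_one_eq_ite [DecidableEq K] (a : K) :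
    a ^ (Fintype.card K - 1) = if a = 0 then 0 else 1 := by
  split_ifs with ha
  · rw [ha, zero_pow (Nat.sub_ne_zero_of_lt Fintype.one_lt_card)]
  · exact pow_card_sub_one_eq_one a ha

theorem prod_X_sub_C_eq_X_pow_card_sub_X : ∏ a : K, (X - C a) = X ^ Fintype.card K - X := by
  rw [Finset.prod_eq_multiset_prod, ← roots_X_pow_card_sub_X]
  refine prod_multiset_X_sub_C_of_monic_of_roots_card_eq ?_ ?_
  · exact monic_X_pow_sub (by rw [degree_X]; exact_mod_cast Fintype.one_lt_card)
  · rw [roots_X_pow_card_sub_X, X_pow_card_sub_X_natDegree_eq K Fintype.one_lt_card]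
    rfl

theorem X_pow_card_sub_X_dvd {p : K[X]} (hp : ∀ a, p.eval a = 0) :
    X ^ Fintype.card K - X ∣ p := by
  rw [← prod_X_sub_C_eq_X_pow_card_sub_X]
  exact Finset.prod_dvd_of_coprime
    ((pairwise_coprime_X_sub_C Function.injective_id).set_pairwise _)
    fun a _ => dvd_iff_isRoot.2 (hp a)

theorem tIdealGen_X_sub_X_pow_card :
    TIdealGen K {X - X ^ Fintype.card K} = vanishingSubmodule K := by
  refine le_antisymm (tIdealGen_le isTIdeal_vanishingSubmodule ?_) fun p hp => ?_
  · simp [mem_vanishingSubmodule, pow_card]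
  · obtain ⟨h, rfl⟩ := X_pow_card_sub_X_dvd (mem_vanishingSubmodule.1 hp)
    have hgen := subset_tIdealGen (k := K) {X - X ^ Fintype.card K} rfl
    simpa only [mul_neg, ← neg_mul, neg_sub] using mul_mem_tIdealGen hgen (-h)

noncomputable def indicatorPoly (b : K) : K[X] :=
  1 - (X - C b) ^ (Fintype.card K - 1)

theorem eval_indicatorPoly [DecidableEq K] (b t : K) :
    (indicatorPoly b).eval t = if t = b then 1 else 0 := by
  simp only [indicatorPoly, eval_sub, eval_one, eval_pow, eval_X, eval_C,
    pow_card_sub_one_eq_ite, sub_eq_zero]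
  split_ifs <;> simp

theorem X_pow_card_sub_one_mem_of_lt {U : Submodule K K[X]} (hU : IsTSpace K U)
    (hlt : vanishingSubmodule K < U) : X ^ (Fintype.card K - 1) ∈ U := by
  classical
  obtain ⟨p, hpU, hpW⟩ := SetLike.exists_of_lt hlt
  obtain ⟨a, ha⟩ : ∃ a, p.eval a ≠ 0 := by simpa [mem_vanishingSubmodule] using hpW
  have hp0 : p.eval 0 = 0 := by rw [← coeff_zero_eq_eval_zero]; exact hU.1 p hpU
  have hsubst : p.comp (C a * X ^ (Fintype.card K - 1)) ∈ U :=
    hU.2 p hpU _ (by simp [coeff_zero_eq_eval_zero, pow_card_sub_one_eq_ite])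
  have hscaled : p.eval a • X ^ (Fintype.card K - 1) ∈ U :=
    mem_of_forall_eval_eq hlt.le hsubst fun t => by
      by_cases ht : t = 0 <;> simp [eval_comp, pow_card_sub_one_eq_ite, ht, hp0]
  exact (U.smul_mem_iff ha).1 hscaled

theorem X_mem_of_X_pow_card_sub_one_mem {U : Submodule K K[X]} (hU : IsTSpace K U)
    (hle : vanishingSubmodule K ≤ U) (h : X ^ (Fintype.card K - 1) ∈ U) : X ∈ U := by
  classical
  have hindicator (b : K) (hb : b ≠ 0) : indicatorPoly b ∈ U := by
    refine mem_of_forall_eval_eq hle (hU.2 _ h (indicatorPoly b) ?_) fun t => ?_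
    · rw [coeff_zero_eq_eval_zero, eval_indicatorPoly, if_neg (Ne.symm hb)]
    · simp only [eval_comp, eval_pow, eval_X, eval_indicatorPoly]
      split_ifs <;> simp [pow_card_sub_one_eq_ite]
  have hsum : ∑ b, b • indicatorPoly b ∈ U := U.sum_mem fun b _ => by
    rcases eq_or_ne b 0 with rfl | hb
    · simp
    · exact U.smul_mem b (hindicator b hb)
  refine mem_of_forall_eval_eq hle hsum fun t => ?_
  simp [eval_finsetSum, eval_indicatorPoly]

end FiniteField

/-- If `k` is a finite field with `q` elements, then `W₀`, the T-ideal of `k[x]₀`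
generated by `x - x^q`, is a maximal T-space of `k[x]₀`. -/
theorem W0_isMaximal (k : Type*) [Field k] [Fintype k] (q : ℕ) (hq : Fintype.card k = q) :
    IsTSpace k (TIdealGen k {Polynomial.X - Polynomial.X ^ q}) ∧
      Polynomial.X ∉ TIdealGen k {Polynomial.X - Polynomial.X ^ q} ∧
      ∀ U : Submodule k (Polynomial k), IsTSpace k U →
        TIdealGen k {Polynomial.X - Polynomial.X ^ q} < U → Polynomial.X ∈ U := by
  subst hq
  rw [FiniteField.tIdealGen_X_sub_X_pow_card]
  refine ⟨isTIdeal_vanishingSubmodule.1, fun hX => ?_, fun U hU hlt => ?_⟩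
  · simpa using mem_vanishingSubmodule.1 hX 1
  · exact FiniteField.X_mem_of_X_pow_card_sub_one_mem hU hlt.le
      (FiniteField.X_pow_card_sub_one_mem_of_lt hU hlt)
end

section
/- Let k be a finite field with q elements and characteristic p > 2, and for each n ≥ 0 let V_n denote the T-space of k[x]_0 generated by x + x^(q^(2^n)). Then for every n ≥ 0 and every m ≥ 1, the polynomial x − x^(q^(2^(n+m))) belongs to V_n. -/
/-!
Substituting `X ^ N` into `X ± X ^ N` gives `X ^ N ± X ^ (N ^ 2)`; subtracting it from (resp. adding it
to) `X ± X ^ N` cancels the middle term and leaves `X - X ^ (N ^ 2)`. So each step squares the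
exponent, and `m` steps from `N = q ^ 2 ^ n` reach `q ^ 2 ^ (n + m)`.
-/

open Polynomial

section TSpaceGen

variable {k : Type*} [Field k] {S : Set k[X]}

theorem subset_TSpaceGen : S ⊆ TSpaceGen k S := fun _ hp =>
  Submodule.mem_sInf.2 fun _ hV => hV.2 hp

theorem comp_mem_TSpaceGen {p g : k[X]} (hp : p ∈ TSpaceGen k S) (hg : g.coeff 0 = 0) :
    p.comp g ∈ TSpaceGen k S :=
  Submodule.mem_sInf.2 fun V hV => hV.1.2 p (Submodule.mem_sInf.1 hp V hV) g hg

theorem comp_X_pow_mem_TSpaceGen {p : k[X]} (hp : p ∈ TSpaceGen k S) {N : ℕ} (hN : N ≠ 0) :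
    p.comp (X ^ N) ∈ TSpaceGen k S :=
  comp_mem_TSpaceGen hp (by rw [coeff_X_pow, if_neg hN.symm])

theorem X_sub_X_pow_sq_mem_of_X_add_X_pow_mem {N : ℕ} (hN : N ≠ 0)
    (h : X + X ^ N ∈ TSpaceGen k S) : X - X ^ (N ^ 2) ∈ TSpaceGen k S := by
  have hcomp : X ^ N + X ^ (N ^ 2) ∈ TSpaceGen k S := by
    simpa only [add_comp, X_comp, X_pow_comp, ← pow_mul, sq] using comp_X_pow_mem_TSpaceGen h hN
  have hsub := Submodule.sub_mem _ h hcomp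
  rwa [add_sub_add_comm, sub_add_sub_cancel] at hsub

theorem X_sub_X_pow_sq_mem_of_X_sub_X_pow_mem {N : ℕ} (hN : N ≠ 0)
    (h : X - X ^ N ∈ TSpaceGen k S) : X - X ^ (N ^ 2) ∈ TSpaceGen k S := by
  have hcomp : X ^ N - X ^ (N ^ 2) ∈ TSpaceGen k S := by
    simpa only [sub_comp, X_comp, X_pow_comp, ← pow_mul, sq] using comp_X_pow_mem_TSpaceGen h hN
  have hadd := Submodule.add_mem _ h hcomp
  rwa [sub_add_sub_cancel] at hadd

theorem X_sub_X_pow_pow_two_pow_mem {N : ℕ} (hN : N ≠ 0) (h : X + X ^ N ∈ TSpaceGen k S)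
    {m : ℕ} (hm : 1 ≤ m) : X - X ^ (N ^ 2 ^ m) ∈ TSpaceGen k S := by
  induction m, hm using Nat.le_induction with
  | base => simpa using X_sub_X_pow_sq_mem_of_X_add_X_pow_mem hN h
  | succ m _ ih =>
    rw [pow_succ, pow_mul]
    exact X_sub_X_pow_sq_mem_of_X_sub_X_pow_mem (pow_ne_zero _ hN) ih

end TSpaceGen

theorem nice_for_Vn_general (k : Type*) [Field k] [Fintype k] (q : ℕ)
    (hq : Fintype.card k = q)
    (n m : ℕ) (hm : 1 ≤ m) :
    Polynomial.X - Polynomial.X ^ (q ^ (2 ^ (n + m))) ∈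
      TSpaceGen k {Polynomial.X + Polynomial.X ^ (q ^ (2 ^ n))} := by
  have hq0 : q ≠ 0 := by
    rw [← hq]
    exact Fintype.card_ne_zero
  rw [pow_add 2 n m, pow_mul q]
  exact X_sub_X_pow_pow_two_pow_mem (pow_ne_zero _ hq0) (subset_TSpaceGen (Set.mem_singleton _)) hm

/-- For a finite field `k` with `q` elements and characteristic `p > 2`, and
`Vₙ` the T-space of `k[x]₀` generated by `x + x^(q^(2^n))`, one has
`x - x^(q^(2^(n+m))) ∈ Vₙ` for all `n ≥ 0` and `m ≥ 1`. -/
theorem nice_for_Vn (k : Type*) [Field k] [Fintype k] (q p : ℕ)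
    (hq : Fintype.card k = q) (hp : ringChar k = p) (hp2 : 2 < p)
    (n m : ℕ) (hm : 1 ≤ m) :
    Polynomial.X - Polynomial.X ^ (q ^ (2 ^ (n + m))) ∈
      TSpaceGen k {Polynomial.X + Polynomial.X ^ (q ^ (2 ^ n))} :=
  nice_for_Vn_general k q hq n m hm
end

section
/- Let k be a finite field with q elements and characteristic p > 2, and for each n ≥ 0 let V_n denote the T-space of k[x]_0 generated by x + x^(q^(2^n)). Then for all n, m ≥ 0 with n ≠ m, V_n + V_m = k[x]_0; that is, x ∈ V_n + V_m. -/
/-! Write `Q = q^(2^n)` and `R = q^(2^m)` with `n < m`. Since `Q` is a power of the characteristic,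
substituting the generator `X + X^Q` into itself gives `X + 2X^Q + X^(Q^2)`, so `X^(Q^2) - X ∈ Vₙ`.
Substitutions `X ↦ X^b` turn `X^a - X, X^b - X ∈ Vₙ` into `X^(ab) - X ∈ Vₙ`, and `R` is a power of
`Q^2`, so `X^R - X ∈ Vₙ`. As `X + X^R ∈ Vₘ` and `2` is invertible, `X ∈ Vₙ + Vₘ`. -/

open Polynomial

theorem mem_TSpaceGen_of_mem {k : Type*} [Field k] {S : Set k[X]} {f : k[X]} (hf : f ∈ S) :
    f ∈ TSpaceGen k S :=
  Submodule.mem_sInf.2 fun _ hV => hV.2 hf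

namespace IsTSpace

variable {k : Type*} [Field k] {V : Submodule k k[X]}

theorem X_pow_mul_sub_X_mem (hV : IsTSpace k V) {a b : ℕ} (ha : X ^ a - X ∈ V)
    (hb : X ^ b - X ∈ V) : X ^ (a * b) - X ∈ V := by
  have hb0 : b ≠ 0 := by
    rintro rfl
    simpa using hV.1 _ hb
  have hcomp : (X ^ a - X : k[X]).comp (X ^ b) ∈ V :=
    hV.2 _ ha _ (by simp [coeff_X_pow, hb0.symm])
  rw [sub_comp, X_pow_comp, X_comp, ← pow_mul, mul_comm] at hcomp
  simpa using V.add_mem hcomp hb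

theorem X_pow_pow_sub_X_mem (hV : IsTSpace k V) {a : ℕ} (ha : X ^ a - X ∈ V) :
    ∀ {t : ℕ}, t ≠ 0 → X ^ (a ^ t) - X ∈ V
  | 0, h => absurd rfl h
  | 1, _ => by simpa using ha
  | t + 2, _ => by
    rw [pow_succ]
    exact hV.X_pow_mul_sub_X_mem (hV.X_pow_pow_sub_X_mem ha t.succ_ne_zero) ha

theorem X_pow_sq_sub_X_mem (hV : IsTSpace k V) (p s : ℕ) [ExpChar k p]
    (hf : X + X ^ (p ^ s) ∈ V) : X ^ ((p ^ s) ^ 2) - X ∈ V := by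
  have hcomp := hV.2 _ hf _ (hV.1 _ hf)
  rw [add_comp, X_comp, X_pow_comp, add_pow_expChar_pow, ← pow_mul, ← sq] at hcomp
  convert V.sub_mem hcomp (V.smul_mem (2 : k) hf) using 1
  rw [two_smul]
  ring

end IsTSpace

theorem X_pow_sub_X_mem_TSpaceGen {k : Type*} [Field k] (p s : ℕ) [ExpChar k p] {t : ℕ}
    (ht : t ≠ 0) : X ^ (((p ^ s) ^ 2) ^ t) - X ∈ TSpaceGen k {X + X ^ (p ^ s)} :=
  Submodule.mem_sInf.2 fun _ ⟨hV, hS⟩ =>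
    hV.X_pow_pow_sub_X_mem (hV.X_pow_sq_sub_X_mem p s (hS rfl)) ht

theorem X_mem_sup_of_X_pow_sub_X_mem {k : Type*} [Field k] (h2 : (2 : k) ≠ 0)
    {V W : Submodule k k[X]} {r : ℕ} (hV : X ^ r - X ∈ V) (hW : X + X ^ r ∈ W) : X ∈ V ⊔ W := by
  have h := (V ⊔ W).smul_mem (2 : k)⁻¹
    ((V ⊔ W).sub_mem (Submodule.mem_sup_right hW) (Submodule.mem_sup_left hV))
  have hsum : (X + X ^ r : k[X]) - (X ^ r - X) = (2 : k) • X := by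
    rw [two_smul]
    ring
  rwa [hsum, smul_smul, inv_mul_cancel₀ h2, one_smul] at h

theorem X_mem_TSpaceGen_sup_of_lt {k : Type*} [Field k] [Fintype k] (h2 : (2 : k) ≠ 0)
    {n m : ℕ} (hnm : n < m) :
    X ∈ TSpaceGen k {X + X ^ (Fintype.card k ^ (2 ^ n))} ⊔
      TSpaceGen k {X + X ^ (Fintype.card k ^ (2 ^ m))} := by
  obtain ⟨p, _⟩ := CharP.exists k
  obtain ⟨d, hp, hcard⟩ := FiniteField.card k p
  have : Fact p.Prime := ⟨hp⟩
  have hexp : Fintype.card k ^ 2 ^ m = ((p ^ ((d : ℕ) * 2 ^ n)) ^ 2) ^ 2 ^ (m - n - 1) := by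
    rw [hcard, ← pow_mul, ← pow_mul, ← pow_mul, ← pow_succ', mul_assoc, ← pow_add]
    congr 3
    omega
  have hQ : Fintype.card k ^ 2 ^ n = p ^ ((d : ℕ) * 2 ^ n) := by rw [hcard, pow_mul]
  refine X_mem_sup_of_X_pow_sub_X_mem h2 ?_ (mem_TSpaceGen_of_mem rfl)
  rw [hQ, hexp]
  exact X_pow_sub_X_mem_TSpaceGen p _ (by positivity)

/-- For a finite field `k` with `q` elements and characteristic `p > 2`, and
`Vₙ` the T-space of `k[x]₀` generated by `x + x^(q^(2^n))`, one has
`Vₙ + Vₘ = k[x]₀` whenever `n ≠ m`, i.e. `x ∈ Vₙ + Vₘ`. -/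
theorem Vn_sup_Vm (k : Type*) [Field k] [Fintype k] (q p : ℕ)
    (hq : Fintype.card k = q) (hp : ringChar k = p) (hp2 : 2 < p)
    (n m : ℕ) (hnm : n ≠ m) :
    Polynomial.X ∈
      TSpaceGen k {Polynomial.X + Polynomial.X ^ (q ^ (2 ^ n))} ⊔
        TSpaceGen k {Polynomial.X + Polynomial.X ^ (q ^ (2 ^ m))} := by
  subst hq
  have h2 : (2 : k) ≠ 0 := Ring.two_ne_zero (by omega)
  rcases hnm.lt_or_gt with h | h
  · exact X_mem_TSpaceGen_sup_of_lt h2 h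
  · rw [sup_comm]
    exact X_mem_TSpaceGen_sup_of_lt h2 h
end

section
/- Let k be a finite field of characteristic p > 2. Then k[x]_0 has infinitely many maximal T-spaces; that is, the set of maximal T-spaces of k[x]_0 is infinite. -/
/-!
Let `q = #k` and let `V n = baseValued k n` be the T-space of polynomials without constant term
mapping `𝔽_{q^n}` into `𝔽_q`, i.e. `P ^ q ≡ P` modulo `X ^ q ^ n - X`. For `n > 1` it misses `X`,
so by Zorn it lies in a maximal T-space `M n`. If `m` is prime to `ℓ` and `ℓ ≠ 0` in `k`, put
`S = ∑_{i < ℓ} X ^ q ^ (m i)`. Modulo `X ^ q ^ ℓ - X` the Frobenius `S ↦ S ^ q` only permutes the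
terms of `S`, because `i ↦ m i + 1` permutes the residues mod `ℓ`; modulo `X ^ q ^ m - X` every
term is `X`. So `S ∈ V ℓ` and `ℓ X - S ∈ V m`, whence `X ∈ V ℓ ⊔ V m` and `M ℓ ≠ M m` for
distinct primes `ℓ, m` different from the characteristic.
-/

open Polynomial Finset

theorem Function.Periodic.sum_range_mul_add {M : Type*} [AddCommMonoid M] {f : ℕ → M} {ℓ : ℕ}
    (hf : Function.Periodic f ℓ) {m : ℕ} (hm : m.Coprime ℓ) (c : ℕ) :
    ∑ i ∈ range ℓ, f (m * i + c) = ∑ i ∈ range ℓ, f i := by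
  classical
  set σ : ℕ → ℕ := fun i => (m * i + c) % ℓ
  have hσ : Set.InjOn σ (range ℓ) := by
    intro i hi j hj hij
    have h : m * i ≡ m * j [MOD ℓ] := Nat.ModEq.add_right_cancel' c hij
    have := Nat.ModEq.cancel_left_of_coprime (Nat.coprime_comm.mp hm) h
    rwa [Nat.ModEq, Nat.mod_eq_of_lt (mem_range.mp hi), Nat.mod_eq_of_lt (mem_range.mp hj)] at this
  have himage : (range ℓ).image σ = range ℓ := by
    refine eq_of_subset_of_card_le (fun j hj => ?_) (card_image_of_injOn hσ).ge
    obtain ⟨i, hi, rfl⟩ := mem_image.mp hj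
    exact mem_range.mpr (Nat.mod_lt _ (Nat.zero_lt_of_lt (mem_range.mp hi)))
  calc ∑ i ∈ range ℓ, f (m * i + c) = ∑ i ∈ range ℓ, f (σ i) :=
        sum_congr rfl fun i _ => (hf.map_mod_nat _).symm
    _ = ∑ j ∈ (range ℓ).image σ, f j := (sum_image hσ).symm
    _ = ∑ i ∈ range ℓ, f i := by rw [himage]

theorem Polynomial.sub_dvd_comp_sub {R : Type*} [CommRing R] (g a b : R[X]) :
    a - b ∣ g.comp a - g.comp b := by
  simpa only [eval_map, comp] using sub_dvd_eval_sub a b (g.map C)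

section

variable {k : Type*} [Field k] [Fintype k]

theorem FiniteField.expand_card_pow (n : ℕ) (f : k[X]) :
    expand k (Fintype.card k ^ n) f = f ^ Fintype.card k ^ n := by
  induction n generalizing f with
  | zero => simp
  | succ n ih => rw [pow_succ, expand_mul, FiniteField.expand_card, ih, ← pow_mul, mul_comm]

variable (k) in
/-- The polynomials vanishing on `𝔽_{q^n}`, where `q = #k`. -/
noncomputable def fieldIdeal (n : ℕ) : Ideal k[X] :=
  Ideal.span {X ^ Fintype.card k ^ n - X}

theorem pow_card_pow_sub_self_mem_fieldIdeal (n : ℕ) (g : k[X]) :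
    g ^ Fintype.card k ^ n - g ∈ fieldIdeal k n := by
  rw [fieldIdeal, Ideal.mem_span_singleton, ← FiniteField.expand_card_pow n g, expand_eq_comp_X_pow]
  simpa only [comp_X] using sub_dvd_comp_sub g (X ^ Fintype.card k ^ n) X

theorem comp_mem_fieldIdeal {n : ℕ} {h : k[X]} (hh : h ∈ fieldIdeal k n) (g : k[X]) :
    h.comp g ∈ fieldIdeal k n := by
  obtain ⟨t, rfl⟩ := Ideal.mem_span_singleton.mp hh
  rw [mul_comp, sub_comp, X_pow_comp, X_comp]
  exact Ideal.mul_mem_right _ _ (pow_card_pow_sub_self_mem_fieldIdeal n g)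

theorem periodic_mk_X_pow_card_pow (n : ℕ) :
    Function.Periodic (fun a => Ideal.Quotient.mk (fieldIdeal k n) (X ^ Fintype.card k ^ a)) n := by
  intro a
  simp only [Ideal.Quotient.eq, pow_add, pow_mul]
  exact pow_card_pow_sub_self_mem_fieldIdeal n _

variable (k) in
/-- The polynomials without constant term mapping `𝔽_{q^n}` into `𝔽_q`, where `q = #k`. -/
noncomputable def baseValued (n : ℕ) : Submodule k k[X] :=
  LinearMap.ker (lcoeff k 0) ⊓
    ((fieldIdeal k n).restrictScalars k).comap
      ((expand k (Fintype.card k)).toLinearMap - LinearMap.id)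

theorem mem_baseValued {n : ℕ} {P : k[X]} :
    P ∈ baseValued k n ↔ P.coeff 0 = 0 ∧ expand k (Fintype.card k) P - P ∈ fieldIdeal k n := by
  simp [baseValued]

theorem isTSpace_baseValued (n : ℕ) : IsTSpace k (baseValued k n) := by
  refine ⟨fun P hP => (mem_baseValued.mp hP).1, fun P hP g hg => mem_baseValued.mpr ⟨?_, ?_⟩⟩
  · rw [coeff_zero_eq_eval_zero, eval_comp, ← coeff_zero_eq_eval_zero, hg,
      ← coeff_zero_eq_eval_zero, (mem_baseValued.mp hP).1]
  · have h := comp_mem_fieldIdeal (mem_baseValued.mp hP).2 g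
    rw [FiniteField.expand_card, sub_comp, pow_comp] at h
    rwa [FiniteField.expand_card]

theorem X_notMem_baseValued {n : ℕ} (hn : 1 < n) : (X : k[X]) ∉ baseValued k n := by
  intro hX
  have hq : 1 < Fintype.card k := Fintype.one_lt_card
  have hdvd := Ideal.mem_span_singleton.mp (mem_baseValued.mp hX).2
  rw [expand_X] at hdvd
  have := natDegree_le_of_dvd hdvd (FiniteField.X_pow_card_sub_X_ne_zero k hq)
  rw [FiniteField.X_pow_card_pow_sub_X_natDegree_eq k (by omega) hq,
    FiniteField.X_pow_card_sub_X_natDegree_eq k hq] at this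
  exact (Nat.pow_lt_pow_right hq hn).not_ge (by simpa using this)

theorem X_mem_baseValued_sup {ℓ m : ℕ} (hm : m.Coprime ℓ) (hℓ : (ℓ : k) ≠ 0) :
    (X : k[X]) ∈ baseValued k ℓ ⊔ baseValued k m := by
  set S : k[X] := ∑ i ∈ range ℓ, X ^ Fintype.card k ^ (m * i)
  have hS0 : S.coeff 0 = 0 := by
    simp [S, coeff_zero_eq_eval_zero, eval_finsetSum, Fintype.card_ne_zero]
  have hexpand :
      expand k (Fintype.card k) S = ∑ i ∈ range ℓ, X ^ Fintype.card k ^ (m * i + 1) := by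
    simp only [S, map_sum, map_pow, expand_X, ← pow_mul, ← pow_succ']
  have hSℓ : S ∈ baseValued k ℓ := by
    refine mem_baseValued.mpr ⟨hS0, ?_⟩
    have hper := periodic_mk_X_pow_card_pow (k := k) ℓ
    rw [← Ideal.Quotient.eq, hexpand, map_sum, map_sum]
    exact (hper.sum_range_mul_add hm 1).trans (hper.sum_range_mul_add hm 0).symm
  have hSm : ℓ • X - S ∈ baseValued k m := by
    refine mem_baseValued.mpr ⟨by simp [hS0], ?_⟩
    have hper := periodic_mk_X_pow_card_pow (k := k) m
    have h1 : ∀ i, Ideal.Quotient.mk (fieldIdeal k m) (X ^ Fintype.card k ^ (m * i + 1)) =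
        Ideal.Quotient.mk (fieldIdeal k m) (X ^ Fintype.card k ^ 1) := fun i => by
      simpa [add_comm, mul_comm] using hper.nat_mul i 1
    have h0 : ∀ i, Ideal.Quotient.mk (fieldIdeal k m) (X ^ Fintype.card k ^ (m * i)) =
        Ideal.Quotient.mk (fieldIdeal k m) (X ^ Fintype.card k ^ 0) := fun i => by
      simpa [mul_comm] using hper.nat_mul_eq i
    rw [← Ideal.Quotient.eq, map_sub, map_nsmul, hexpand, expand_X]
    simp only [S, map_sub, map_nsmul, map_sum, h1, h0, sum_const, card_range, pow_one, pow_zero,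
      sub_self]
  have hX : (X : k[X]) = (ℓ : k)⁻¹ • (S + (ℓ • X - S)) := by
    rw [add_sub_cancel, ← Nat.cast_smul_eq_nsmul k, smul_smul, inv_mul_cancel₀ hℓ, one_smul]
  rw [hX]
  exact Submodule.smul_mem _ _ (Submodule.add_mem_sup hSℓ hSm)

end

theorem isTSpace_sSup_of_directedOn {k : Type*} [Field k] {c : Set (Submodule k k[X])}
    (hne : c.Nonempty) (hdir : DirectedOn (· ≤ ·) c) (hc : ∀ V ∈ c, IsTSpace k V) :
    IsTSpace k (sSup c) := by
  refine ⟨fun P hP => ?_, fun P hP g hg => ?_⟩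
  · obtain ⟨V, hV, hPV⟩ := (Submodule.mem_sSup_of_directed hne hdir).mp hP
    exact (hc V hV).1 P hPV
  · obtain ⟨V, hV, hPV⟩ := (Submodule.mem_sSup_of_directed hne hdir).mp hP
    exact le_sSup hV ((hc V hV).2 P hPV g hg)

theorem exists_maximal_isTSpace_notMem_ge {k : Type*} [Field k] {V : Submodule k k[X]}
    (hV : IsTSpace k V) {f : k[X]} (hf : f ∉ V) :
    ∃ M, V ≤ M ∧ Maximal (fun W => IsTSpace k W ∧ f ∉ W) M := by
  refine zorn_le_nonempty₀ _ (fun c hc hchain W hW => ?_) V ⟨hV, hf⟩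
  have hdir : DirectedOn (· ≤ ·) c := hchain.directedOn
  refine ⟨sSup c, ⟨isTSpace_sSup_of_directedOn ⟨W, hW⟩ hdir fun V hV => (hc hV).1, ?_⟩,
    fun V hV => le_sSup hV⟩
  intro hfc
  obtain ⟨V, hV, hfV⟩ := (Submodule.mem_sSup_of_directed ⟨W, hW⟩ hdir).mp hfc
  exact (hc hV).2 hfV

theorem infinite_setOf_prime_and_natCast_ne_zero (R : Type*) [NonAssocRing R] [Nontrivial R] :
    {ℓ : ℕ | ℓ.Prime ∧ (ℓ : R) ≠ 0}.Infinite := by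
  refine (Nat.infinite_setOfPred_prime.sdiff (Set.finite_singleton (ringChar R))).mono ?_
  rintro ℓ ⟨hℓ, hne⟩
  exact ⟨hℓ, fun h0 => hne ((Nat.dvd_prime hℓ).mp (ringChar.dvd h0) |>.resolve_left
    CharP.ringChar_ne_one).symm⟩

theorem infinitely_many_maximal_TSpaces_general (k : Type*) [Field k] [Fintype k] :
    {V : Submodule k (Polynomial k) | IsTSpace k V ∧ Polynomial.X ∉ V ∧
      ∀ U : Submodule k (Polynomial k), IsTSpace k U → V ≤ U → Polynomial.X ∉ U →
        U = V}.Infinite := by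
  have := (infinite_setOf_prime_and_natCast_ne_zero k).to_subtype
  choose M hVM hM using fun ℓ : {ℓ : ℕ | ℓ.Prime ∧ (ℓ : k) ≠ 0} =>
    exists_maximal_isTSpace_notMem_ge (isTSpace_baseValued (k := k) ℓ)
      (X_notMem_baseValued ℓ.2.1.one_lt)
  refine Set.infinite_of_injective_forall_mem (f := M) (fun ℓ m hℓm => ?_)
    fun ℓ => ⟨(hM ℓ).1.1, (hM ℓ).1.2, fun U hU hMU hXU => le_antisymm ((hM ℓ).2 ⟨hU, hXU⟩ hMU) hMU⟩
  by_contra hne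
  have hcop : m.1.Coprime ℓ :=
    (Nat.coprime_primes m.2.1 ℓ.2.1).mpr fun h => hne (Subtype.ext h).symm
  exact (hM ℓ).1.2 (sup_le (hVM ℓ) (hℓm ▸ hVM m) (X_mem_baseValued_sup hcop ℓ.2.2))

/-- If `k` is a finite field of characteristic `p > 2`, then `k[x]₀` has infinitely
many maximal T-spaces. -/
theorem infinitely_many_maximal_TSpaces (k : Type*) [Field k] [Fintype k] (p : ℕ)
    (hp : ringChar k = p) (hp2 : 2 < p) :
    {V : Submodule k (Polynomial k) | IsTSpace k V ∧ Polynomial.X ∉ V ∧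
      ∀ U : Submodule k (Polynomial k), IsTSpace k U → V ≤ U → Polynomial.X ∉ U →
        U = V}.Infinite :=
  infinitely_many_maximal_TSpaces_general k
end

section
/- Let k be a finite field with q elements and characteristic 2. Then for every integer m ≥ 1, the T-space W_m of k[x]_0 generated by {x + x^q, x^(q^m + 1)} is a proper T-space of k[x]_0; that is, x ∉ W_m. -/
/-!
`X` is separated from `Wₘ` by a linear functional. Put `N = q ^ m`, let `c n` be `1` when
the residue of `n` modulo `N + 1` is a power of `q` and `0` otherwise, and `φ p = ∑ c n * pₙ`.
The largest T-space inside `ker φ` contains both generators. Since `g ^ q = expand q g` and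
`c (n * q) = c n`, we get `φ (g + g ^ q) = 2 φ g = 0`. Next,
`φ (g ^ (N + 1)) = ∑ c (i * N + j) gᵢ gⱼ`, and `q ^ m ≡ -1` makes `c (i * N + j)` symmetric
in `i, j` and zero on the diagonal (`i * (N + 1) ≡ 0` is not a unit), so the sum vanishes in
characteristic 2. But `φ X = c 1 = 1`.
-/

open Polynomial

section TSpace

variable {k : Type*} [Field k]

lemma coeff_zero_comp_eq_zero {p g : k[X]} (hp : p.coeff 0 = 0) (hg : g.coeff 0 = 0) :
    (p.comp g).coeff 0 = 0 := by
  rw [coeff_zero_eq_eval_zero, eval_comp, ← coeff_zero_eq_eval_zero, hg,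
    ← coeff_zero_eq_eval_zero, hp]

/-- The largest T-space on which `φ` vanishes. -/
def compAnnihilator (φ : k[X] →ₗ[k] k) : Submodule k k[X] where
  carrier := {p | p.coeff 0 = 0 ∧ ∀ g : k[X], g.coeff 0 = 0 → φ (p.comp g) = 0}
  add_mem' := by
    rintro p r ⟨hp0, hp⟩ ⟨hr0, hr⟩
    refine ⟨by simp [hp0, hr0], fun g hg => ?_⟩
    rw [add_comp, map_add, hp g hg, hr g hg, add_zero]
  zero_mem' := ⟨coeff_zero 0, fun g _ => by rw [zero_comp, map_zero]⟩
  smul_mem' := by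
    rintro b p ⟨hp0, hp⟩
    refine ⟨by simp [hp0], fun g hg => ?_⟩
    rw [smul_comp, map_smul, hp g hg, smul_zero]

lemma isTSpace_compAnnihilator (φ : k[X] →ₗ[k] k) : IsTSpace k (compAnnihilator φ) := by
  refine ⟨fun p hp => hp.1, ?_⟩
  rintro p ⟨hp0, hp⟩ g hg
  refine ⟨coeff_zero_comp_eq_zero hp0 hg, fun g' hg' => ?_⟩
  rw [comp_assoc]
  exact hp (g.comp g') (coeff_zero_comp_eq_zero hg hg')

lemma TSpaceGen_le {S : Set k[X]} {V : Submodule k k[X]} (hV : IsTSpace k V)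
    (hS : S ⊆ V) : TSpaceGen k S ≤ V :=
  sInf_le ⟨hV, hS⟩

lemma map_eq_zero_of_mem_TSpaceGen {S : Set k[X]} (φ : k[X] →ₗ[k] k)
    (hS₀ : ∀ s ∈ S, s.coeff 0 = 0)
    (hS : ∀ s ∈ S, ∀ g : k[X], g.coeff 0 = 0 → φ (s.comp g) = 0)
    {p : k[X]} (hp : p ∈ TSpaceGen k S) : φ p = 0 := by
  have hpφ := TSpaceGen_le (isTSpace_compAnnihilator φ) (fun s hs => ⟨hS₀ s hs, hS s hs⟩) hp
  simpa using hpφ.2 X coeff_X_zero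

end TSpace

section WeightedCoeffSum

variable {R : Type*} [CommRing R]

noncomputable def weightedCoeffSum (c : ℕ → R) : R[X] →ₗ[R] R :=
  lsum fun n => LinearMap.mulLeft R (c n)

lemma weightedCoeffSum_monomial (c : ℕ → R) (n : ℕ) (a : R) :
    weightedCoeffSum c (monomial n a) = c n * a := by
  simp [weightedCoeffSum, sum_monomial_index]

lemma weightedCoeffSum_expand (c : ℕ → R) (r : ℕ) (p : R[X]) :
    weightedCoeffSum c (expand R r p) = weightedCoeffSum (fun n => c (n * r)) p := by
  induction p using Polynomial.induction_on' with
  | add p q hp hq => rw [map_add, map_add, hp, hq, map_add]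
  | monomial n a => rw [expand_monomial, weightedCoeffSum_monomial, weightedCoeffSum_monomial]

lemma CharTwo.sum_product_eq_zero_of_symm [CharP R 2] {ι : Type*} (s : Finset ι)
    (a : ι → ι → R) (hsymm : ∀ i j, a i j = a j i) (hdiag : ∀ i, a i i = 0) :
    ∑ x ∈ s ×ˢ s, a x.1 x.2 = 0 := by
  refine Finset.sum_involution (fun x _ => x.swap) (fun x _ => ?_) (fun x _ hx hswap => ?_)
    (fun x hx => Finset.mem_product.2 (Finset.mem_product.1 hx).symm)
    (fun x _ => x.swap_swap)
  · rw [Prod.fst_swap, Prod.snd_swap, hsymm, CharTwo.add_self_eq_zero]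
  · refine absurd ?_ hx
    rw [← congrArg Prod.snd hswap]
    exact hdiag x.1

lemma weightedCoeffSum_expand_mul_self [CharP R 2] (c : ℕ → R) (r : ℕ)
    (hsymm : ∀ i j, c (i * r + j) = c (j * r + i)) (hdiag : ∀ i, c (i * r + i) = 0) (p : R[X]) :
    weightedCoeffSum c (expand R r p * p) = 0 := by
  have hexpand : expand R r p * p =
      ∑ x ∈ p.support ×ˢ p.support, monomial (x.1 * r + x.2) (p.coeff x.1 * p.coeff x.2) := by
    conv_lhs => rw [p.as_sum_support]
    simp only [map_sum, expand_monomial, Finset.sum_mul_sum, monomial_mul_monomial,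
      Finset.sum_product]
  rw [hexpand, map_sum]
  simp only [weightedCoeffSum_monomial]
  exact CharTwo.sum_product_eq_zero_of_symm _ (fun i j => c (i * r + j) * (p.coeff i * p.coeff j))
    (fun i j => by rw [hsymm, mul_comm (p.coeff i)]) (fun i => by rw [hdiag, zero_mul])

end WeightedCoeffSum

lemma FiniteField.expand_card_pow_s8 {K : Type*} [Field K] [Fintype K] (f : K[X]) (m : ℕ) :
    expand K (Fintype.card K ^ m) f = f ^ Fintype.card K ^ m := by
  induction m generalizing f with
  | zero => simp
  | succ m ih => rw [pow_succ, expand_mul, ih, FiniteField.expand_card, ← pow_mul, mul_comm]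

section Powers

lemma pow_mul_mem_powers_iff {M : Type*} [Monoid M] {u x : M} {n : ℕ} (hn : n ≠ 0)
    (hu : u ^ n = 1) (j : ℕ) : u ^ j * x ∈ Submonoid.powers u ↔ x ∈ Submonoid.powers u := by
  refine ⟨fun ⟨t, ht⟩ => ⟨n * j - j + t, ?_⟩,
    Submonoid.mul_mem _ (Submonoid.pow_mem _ (Submonoid.mem_powers u) j)⟩
  have hj : n * j - j + j = n * j :=
    Nat.sub_add_cancel (Nat.le_mul_of_pos_left j (Nat.pos_of_ne_zero hn))
  change u ^ t = u ^ j * x at ht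
  change u ^ (n * j - j + t) = x
  rw [pow_add, ht, ← mul_assoc, ← pow_add, hj, pow_mul, hu, one_pow, one_mul]

lemma neg_mem_powers_iff {R : Type*} [Ring R] {u x : R} {m : ℕ} (hm : m ≠ 0) (hu : u ^ m = -1) :
    -x ∈ Submonoid.powers u ↔ x ∈ Submonoid.powers u := by
  have hu2 : u ^ (2 * m) = 1 := by rw [mul_comm, pow_mul, hu, neg_one_sq]
  rw [← neg_one_mul, ← hu]
  exact pow_mul_mem_powers_iff (by omega) hu2 m

lemma zero_notMem_powers {M₀ : Type*} [MonoidWithZero M₀] [Nontrivial M₀] {u : M₀}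
    (hu : IsUnit u) : (0 : M₀) ∉ Submonoid.powers u :=
  fun ⟨t, ht⟩ => (hu.pow t).ne_zero ht

end Powers

section PowerResidues

def powerResidues (q m : ℕ) : Set ℕ :=
  {n | (n : ZMod (q ^ m + 1)) ∈ Submonoid.powers (q : ZMod (q ^ m + 1))}

variable {q m : ℕ}

lemma natCast_pow_eq_neg_one : (q : ZMod (q ^ m + 1)) ^ m = -1 := by
  have h : ((q ^ m + 1 : ℕ) : ZMod (q ^ m + 1)) = 0 := ZMod.natCast_self _
  push_cast at h
  exact eq_neg_of_add_eq_zero_left h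

lemma one_mem_powerResidues : 1 ∈ powerResidues q m :=
  ⟨0, by simp⟩

lemma mul_mem_powerResidues_iff (hm : m ≠ 0) {n : ℕ} :
    n * q ∈ powerResidues q m ↔ n ∈ powerResidues q m := by
  have hu : (q : ZMod (q ^ m + 1)) ^ (2 * m) = 1 := by
    rw [mul_comm, pow_mul, natCast_pow_eq_neg_one, neg_one_sq]
  simpa [powerResidues, mul_comm] using
    pow_mul_mem_powers_iff (x := (n : ZMod (q ^ m + 1))) (by omega) hu 1

lemma mul_add_mem_powerResidues_comm (hm : m ≠ 0) (i j : ℕ) :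
    i * q ^ m + j ∈ powerResidues q m ↔ j * q ^ m + i ∈ powerResidues q m := by
  have hcast : ∀ a b : ℕ, ((a * q ^ m + b : ℕ) : ZMod (q ^ m + 1)) = b - a := fun a b => by
    push_cast
    rw [natCast_pow_eq_neg_one]
    ring
  simp only [powerResidues, Set.mem_ofPred_eq, hcast]
  rw [← neg_sub, neg_mem_powers_iff hm natCast_pow_eq_neg_one]

lemma mul_add_self_notMem_powerResidues (hq : q ≠ 0) (hm : m ≠ 0) (i : ℕ) :
    i * q ^ m + i ∉ powerResidues q m := by
  have : Fact (1 < q ^ m + 1) := ⟨by have := pow_pos (Nat.pos_of_ne_zero hq) m; omega⟩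
  have hcast : ((i * q ^ m + i : ℕ) : ZMod (q ^ m + 1)) = 0 := by
    rw [← mul_add_one, Nat.cast_mul, ZMod.natCast_self, mul_zero]
  have hunit : IsUnit (q : ZMod (q ^ m + 1)) :=
    (isUnit_pow_iff hm).1 (natCast_pow_eq_neg_one ▸ isUnit_neg_one)
  simpa [powerResidues, hcast] using zero_notMem_powers hunit

end PowerResidues

open Polynomial in
/-- For a finite field `k` with `q` elements of characteristic 2 and `m ≥ 1`, the
T-space `Wₘ` generated by `{x + x^q, x^(qᵐ+1)}` is a proper T-space of `k[x]₀`. -/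
theorem Wm_proper (k : Type*) [Field k] [Fintype k] (q : ℕ)
    (hq : Fintype.card k = q) (h2 : ringChar k = 2) (m : ℕ) (hm : 1 ≤ m) :
    Polynomial.X ∉ TSpaceGen k {Polynomial.X + Polynomial.X ^ q,
      Polynomial.X ^ (q ^ m + 1)} := by
  classical
  have : CharP k 2 := ringChar.of_eq h2
  have hm₀ : m ≠ 0 := by omega
  subst hq
  let c : ℕ → k := fun n => if n ∈ powerResidues (Fintype.card k) m then 1 else 0
  have hc_mul : (fun n => c (n * Fintype.card k)) = c := funext fun n => by
    simp only [c, mul_mem_powerResidues_iff hm₀]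
  intro hX
  refine one_ne_zero (α := k) ?_
  calc (1 : k) = weightedCoeffSum c X := by
        rw [← monomial_one_one_eq_X, weightedCoeffSum_monomial, mul_one]
        exact (if_pos one_mem_powerResidues).symm
    _ = 0 := map_eq_zero_of_mem_TSpaceGen _ ?_ ?_ hX
  · rintro s (rfl | rfl)
    · simp [coeff_X_pow, Fintype.card_ne_zero.symm]
    · simp [coeff_X_pow]
  · rintro s (rfl | rfl) g -
    · rw [add_comp, X_comp, pow_comp, X_comp, ← FiniteField.expand_card, map_add,
        weightedCoeffSum_expand, hc_mul, CharTwo.add_self_eq_zero]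
    · rw [pow_comp, X_comp, pow_succ, ← FiniteField.expand_card_pow_s8]
      refine weightedCoeffSum_expand_mul_self c _ (fun i j => ?_) (fun i => ?_) g
      · simp only [c, mul_add_mem_powerResidues_comm hm₀]
      · simp [c, mul_add_self_notMem_powerResidues Fintype.card_ne_zero hm₀]
end

section
/- Let k be a finite field with q elements and characteristic 2, and for each integer t ≥ 1 let W_t denote the T-space of k[x]_0 generated by {x + x^q, x^(q^t + 1)}. Then for all nonnegative integers n, m with n ≠ m, W_(q^n) + W_(q^m) = k[x]_0; that is, x ∈ W_(q^n) + W_(q^m). -/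
/-! In characteristic 2, substituting `X ^ j` into `X + X ^ q` and telescoping shows
`X + X ^ q ^ v ∈ W_t` for every `v`; expanding `(X ^ a + X ^ b) ^ (Q + 1)` with `Q = q ^ t`, a power
of 2, shows `X ^ (a Q + b) + X ^ (a + b Q) ∈ W_t`. Hence `X + X ^ (a + b Q) ∈ W_t` whenever `a Q + b`
is a power of `q`.

Let `Q = q ^ q ^ n` and `R = q ^ q ^ m` with `n < m`. Then `R` is an even power of `Q`, so
`R - 1 = s (Q² - 1)`, and `a = s Q / 2`, `b = R - a Q` satisfy `a Q + b = R` and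
`a + b Q = (Q / 2) (R + 1)`. Thus `X ^ (a + b Q) ∈ W_(q ^ m)` is a substitution instance of
`X ^ (R + 1)`, and `X` is the difference of `X + X ^ (a + b Q) ∈ W_(q ^ n)` and it. -/

open Polynomial

section TSpace

variable {k : Type*} [Field k]

theorem mem_tSpaceGen_iff {S : Set k[X]} {p : k[X]} :
    p ∈ TSpaceGen k S ↔ ∀ V, IsTSpace k V → S ⊆ V → p ∈ V := by
  simp [TSpaceGen, Submodule.mem_sInf, and_imp]

namespace IsTSpace

variable {V : Submodule k k[X]}

theorem comp_X_pow_mem (hV : IsTSpace k V) {p : k[X]} (hp : p ∈ V) {j : ℕ} (hj : j ≠ 0) :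
    p.comp (X ^ j) ∈ V :=
  hV.2 p hp _ (by simp [coeff_X_pow, hj.symm])

theorem X_add_X_pow_pow_mem [CharP k 2] (hV : IsTSpace k V) {q : ℕ} (hq : q ≠ 0)
    (h : X + X ^ q ∈ V) (v : ℕ) : X + X ^ q ^ v ∈ V := by
  induction v with
  | zero =>
    rw [pow_zero, pow_one, ← two_mul, CharTwo.two_eq_zero, zero_mul]
    exact V.zero_mem
  | succ v ih =>
    have hstep := hV.comp_X_pow_mem h (pow_ne_zero v hq)
    convert V.add_mem ih hstep using 1
    simp only [add_comp, X_comp, pow_comp, ← pow_mul, pow_succ]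
    linear_combination (-(X : k[X]) ^ q ^ v) * CharTwo.two_eq_zero (R := k[X])

theorem X_pow_add_X_pow_mem {p : ℕ} [ExpChar k p] (hV : IsTSpace k V) {L : ℕ}
    (h : X ^ (p ^ L + 1) ∈ V) {a b : ℕ} (ha : a ≠ 0) (hb : b ≠ 0) :
    X ^ (a * p ^ L + b) + X ^ (a + b * p ^ L) ∈ V := by
  have hab := hV.2 _ h (X ^ a + X ^ b) (by simp [coeff_X_pow, ha.symm, hb.symm])
  have hfrob : ((X : k[X]) ^ a + X ^ b) ^ p ^ L = X ^ (a * p ^ L) + X ^ (b * p ^ L) := by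
    rw [add_pow_expChar_pow, ← pow_mul, ← pow_mul]
  have hexpand : (X ^ (p ^ L + 1)).comp (X ^ a + X ^ b) - (X ^ (p ^ L + 1)).comp (X ^ a)
      - (X ^ (p ^ L + 1)).comp (X ^ b) = (X ^ (a * p ^ L + b) + X ^ (a + b * p ^ L) : k[X]) := by
    simp only [pow_comp, X_comp]
    rw [pow_succ, pow_succ, pow_succ, hfrob]
    ring
  rw [← hexpand]
  exact V.sub_mem (V.sub_mem hab (hV.comp_X_pow_mem h ha)) (hV.comp_X_pow_mem h hb)

theorem X_pow_mul_mem (hV : IsTSpace k V) {d : ℕ} (h : X ^ d ∈ V) {e : ℕ} (he : e ≠ 0) :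
    X ^ (e * d) ∈ V := by
  simpa [pow_mul] using hV.comp_X_pow_mem h he

theorem X_add_X_pow_mem [CharP k 2] (hV : IsTSpace k V) {q L a b v : ℕ} (hq : q ≠ 0)
    (hX : X + X ^ q ∈ V) (hXL : X ^ (2 ^ L + 1) ∈ V) (ha : a ≠ 0) (hb : b ≠ 0)
    (hab : a * 2 ^ L + b = q ^ v) : X + X ^ (a + b * 2 ^ L) ∈ V := by
  have hsum := V.add_mem (hV.X_add_X_pow_pow_mem hq hX v) (hV.X_pow_add_X_pow_mem hXL ha hb)
  rw [hab] at hsum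
  convert hsum using 1
  linear_combination (-(X : k[X]) ^ q ^ v) * CharTwo.two_eq_zero (R := k[X])

end IsTSpace

end TSpace

theorem exists_mul_add_eq_and_add_mul_eq {Q R : ℕ} (hQ : 2 ∣ Q) (hQ0 : 0 < Q) (hR : 1 < R)
    (hdvd : Q ^ 2 - 1 ∣ R - 1) :
    ∃ a b, a ≠ 0 ∧ b ≠ 0 ∧ a * Q + b = R ∧ a + b * Q = Q / 2 * (R + 1) := by
  obtain ⟨y, rfl⟩ := hQ
  obtain ⟨s, hs⟩ := hdvd
  have hy : 1 ≤ y := by omega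
  have hs0 : s ≠ 0 := by rintro rfl; omega
  have h2y : 1 ≤ 2 * y ^ 2 := by nlinarith
  have hRs : (R : ℤ) = s * (4 * y ^ 2 - 1) + 1 := by
    have : ((R - 1 : ℕ) : ℤ) = (((2 * y) ^ 2 - 1 : ℕ) : ℤ) * s := by rw [hs]; push_cast; ring
    push_cast [Nat.cast_sub hR.le, Nat.cast_sub (show 1 ≤ (2 * y) ^ 2 by nlinarith)] at this
    linear_combination this
  refine ⟨s * y, s * (2 * y ^ 2 - 1) + 1, by positivity, by omega, ?_, ?_⟩
  · zify [h2y]; linear_combination -hRs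
  · rw [Nat.mul_div_cancel_left _ two_pos]
    zify [h2y]; linear_combination -y * hRs

/-- For a finite field `k` with `q` elements of characteristic 2, with `W_t` the
T-space of `k[x]₀` generated by `{x + x^q, x^(qᵗ+1)}`, one has
`W_(qⁿ) + W_(qᵐ) = k[x]₀` for `n ≠ m`, i.e. `x ∈ W_(qⁿ) + W_(qᵐ)`. -/
theorem Wqn_sup_Wqm (k : Type*) [Field k] [Fintype k] (q : ℕ)
    (hq : Fintype.card k = q) (h2 : ringChar k = 2) (n m : ℕ) (hnm : n ≠ m) :
    Polynomial.X ∈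
      TSpaceGen k {Polynomial.X + Polynomial.X ^ q,
          Polynomial.X ^ (q ^ (q ^ n) + 1)} ⊔
        TSpaceGen k {Polynomial.X + Polynomial.X ^ q,
          Polynomial.X ^ (q ^ (q ^ m) + 1)} := by
  wlog hlt : n < m generalizing n m
  · rw [sup_comm]
    exact this m n hnm.symm (lt_of_le_of_ne (not_lt.1 hlt) hnm.symm)
  have : CharP k 2 := ringChar.eq_iff.mp h2
  obtain ⟨s, -, hcard⟩ := FiniteField.card k 2
  have hq2 : q = 2 ^ (s : ℕ) := hq ▸ hcard
  have hq1 : 1 < q := hq2 ▸ Nat.one_lt_two_pow s.ne_zero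
  set L := (s : ℕ) * q ^ n
  have hQ : q ^ q ^ n = 2 ^ L := by rw [pow_mul, ← hq2]
  have hR : q ^ q ^ m = (q ^ q ^ n) ^ q ^ (m - n) := by
    rw [← pow_mul, ← pow_add, Nat.add_sub_cancel' hlt.le]
  have hd : 2 ∣ q ^ (m - n) := dvd_pow (hq2 ▸ dvd_pow_self 2 s.ne_zero) (by omega)
  have hQ2 : 2 ≤ q ^ q ^ n := Nat.one_lt_pow (by positivity) hq1
  obtain ⟨a, b, ha, hb, hab, hN⟩ := exists_mul_add_eq_and_add_mul_eq
    (hQ ▸ dvd_pow_self 2 (by positivity)) (by omega) (Nat.one_lt_pow (by positivity) hq1)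
    (hR ▸ Nat.pow_sub_one_dvd_pow_sub_one _ hd)
  have he : q ^ q ^ n / 2 ≠ 0 := by omega
  rw [hQ] at hab hN he ⊢
  have hW : X + X ^ (a + b * 2 ^ L) ∈ TSpaceGen k {X + X ^ q, X ^ (2 ^ L + 1)} :=
    mem_tSpaceGen_iff.2 fun V hV hS =>
      hV.X_add_X_pow_mem (by omega) (hS (by simp)) (hS (by simp)) ha hb hab
  have hW' : X ^ (a + b * 2 ^ L) ∈ TSpaceGen k {X + X ^ q, X ^ (q ^ q ^ m + 1)} :=
    mem_tSpaceGen_iff.2 fun V hV hS => hN ▸ hV.X_pow_mul_mem (hS (by simp)) he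
  simpa using Submodule.sub_mem_sup hW hW'
end

section
/- Let k be the field with 2 elements. Then the T-space of k[x]_0 generated by {x + x², x⁷} is all of k[x]_0; that is, x belongs to the T-space of k[x]_0 generated by {x + x², x⁷}. -/
open Polynomial

namespace IsTSpace

variable {k : Type*} [Field k] {V : Submodule k k[X]}

theorem pow_mem_of_X_pow_mem (hV : IsTSpace k V) {n : ℕ} (hXn : X ^ n ∈ V) {f : k[X]}
    (hf : f.coeff 0 = 0) : f ^ n ∈ V := by
  simpa using hV.2 _ hXn f hf

theorem add_sq_mem (hV : IsTSpace k V) (hX : X + X ^ 2 ∈ V) {f : k[X]} (hf : f.coeff 0 = 0) :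
    f + f ^ 2 ∈ V := by
  simpa using hV.2 _ hX f hf

theorem add_pow_two_pow_mem [CharP k 2] (hV : IsTSpace k V) (hX : X + X ^ 2 ∈ V) {f : k[X]}
    (hf : f.coeff 0 = 0) (n : ℕ) : f + f ^ 2 ^ n ∈ V := by
  induction n with
  | zero => simp [CharTwo.add_self_eq_zero]
  | succ n ih =>
    have hfn : (f ^ 2 ^ n).coeff 0 = 0 := by
      rw [coeff_zero_eq_eval_zero, eval_pow, ← coeff_zero_eq_eval_zero, hf, zero_pow (by simp)]
    have : f + f ^ 2 ^ (n + 1) = (f + f ^ 2 ^ n) + (f ^ 2 ^ n + (f ^ 2 ^ n) ^ 2) := by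
      rw [← add_assoc, add_assoc f, CharTwo.add_self_eq_zero, add_zero, ← pow_mul, pow_succ]
    rw [this]
    exact add_mem ih (hV.add_sq_mem hX hfn)

end IsTSpace

/-- Found by linear algebra over `𝔽₂`: modulo the elements `f + f ^ 2 ^ n`, a monomial `X ^ m`
only depends on the odd part of `m`, and the odd parts of the exponents in `X + ∑ h⁷` cancel. -/
theorem X_eq_sum_add_pow_two_pow_add_sum_pow_seven :
    (X : (ZMod 2)[X]) =
      ([(X, 3), (X ^ 10, 2), (X ^ 14, 1), (X ^ 15, 1), (X ^ 18, 1), (X ^ 19, 1)].map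
          fun fn : (ZMod 2)[X] × ℕ => fn.1 + fn.1 ^ 2 ^ fn.2).sum +
      ([X + X ^ 2 + X ^ 4, X + X ^ 3 + X ^ 4, X ^ 2 + X ^ 3 + X ^ 6,
          X ^ 2 + X ^ 3 + X ^ 4 + X ^ 5, X ^ 2 + X ^ 3 + X ^ 4 + X ^ 6].map (· ^ 7)).sum := by
  simp only [List.map_cons, List.map_nil, List.sum_cons, List.sum_nil]
  ring_nf
  reduce_mod_char

/-- Over the field with 2 elements, the T-space generated by `{x + x², x⁷}` is all of
`k[x]₀`; that is, `x` belongs to it. -/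
theorem TSpace_x_x7_eq_top :
    Polynomial.X ∈
      TSpaceGen (ZMod 2) {Polynomial.X + Polynomial.X ^ 2, Polynomial.X ^ 7} := by
  rw [TSpaceGen, Submodule.mem_sInf]
  rintro V ⟨hV, hS⟩
  have hX : X + X ^ 2 ∈ V := hS (Set.mem_insert _ _)
  have hX7 : X ^ 7 ∈ V := hS (Set.mem_insert_of_mem _ rfl)
  rw [X_eq_sum_add_pow_two_pow_add_sum_pow_seven]
  refine add_mem (list_sum_mem (List.forall_mem_map.2 fun fn hfn => ?_))
    (list_sum_mem (List.forall_mem_map.2 fun h hh => hV.pow_mem_of_X_pow_mem hX7 ?_))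
  · refine hV.add_pow_two_pow_mem hX ?_ fn.2
    simp only [List.mem_cons, List.not_mem_nil, or_false] at hfn
    rcases hfn with rfl | rfl | rfl | rfl | rfl | rfl <;> simp
  · simp only [List.mem_cons, List.not_mem_nil, or_false] at hh
    rcases hh with rfl | rfl | rfl | rfl | rfl <;> simp
end

section
/- Let k be an infinite field, let X be a nonempty type, fix x ∈ X, and let c ∈ k⟨X⟩ be defined by c = ι(x)^p if the characteristic p of k is positive, and c = 1 if k has characteristic 0. Let Y = T^{(2)} + S, where S is the T-space of k⟨X⟩ generated by c. Then every proper T-space of k⟨X⟩ is contained in Y; that is, every T-space V of k⟨X⟩ with V ≠ k⟨X⟩ satisfies V ⊆ Y. -/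
/-- A T-space of the free unital associative algebra `k⟨X⟩`: a `k`-submodule invariant
under every `k`-algebra endomorphism of `k⟨X⟩`. -/
def IsTSpaceF (k X : Type*) [Field k] (V : Submodule k (FreeAlgebra k X)) : Prop :=
  ∀ φ : FreeAlgebra k X →ₐ[k] FreeAlgebra k X, ∀ v ∈ V, φ v ∈ V

/-- The T-space of `k⟨X⟩` generated by a set `S`. -/
def TSpaceGenF (k X : Type*) [Field k] (S : Set (FreeAlgebra k X)) :
    Submodule k (FreeAlgebra k X) :=
  sInf {V | IsTSpaceF k X V ∧ S ⊆ (V : Set (FreeAlgebra k X))}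

/-- A T-ideal of `k⟨X⟩`: a two-sided ideal that is also a T-space. -/
def IsTIdealF (k X : Type*) [Field k] (V : Submodule k (FreeAlgebra k X)) : Prop :=
  IsTSpaceF k X V ∧ ∀ a ∈ V, ∀ r : FreeAlgebra k X, r * a ∈ V ∧ a * r ∈ V

/-- The T-ideal of `k⟨X⟩` generated by a set `S`. -/
def TIdealGenF (k X : Type*) [Field k] (S : Set (FreeAlgebra k X)) :
    Submodule k (FreeAlgebra k X) :=
  sInf {V | IsTIdealF k X V ∧ S ⊆ (V : Set (FreeAlgebra k X))}

/-- `T⁽²⁾`: the smallest T-ideal of `k⟨X⟩` containing all commutators `ab - ba`. -/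
def T2 (k X : Type*) [Field k] : Submodule k (FreeAlgebra k X) :=
  sInf {V | IsTIdealF k X V ∧ ∀ a b : FreeAlgebra k X, a * b - b * a ∈ V}

/-!
Write `π : k⟨X⟩ → k[X]` for the abelianization and `p = ringChar k`, so that the generator is
`ι x ^ p` also when `p = 0`. The kernel of `π` lies in every ideal containing all commutators,
in particular in `T⁽²⁾`. Let `v ∈ V`. If some monomial `X^d` of `π v` has an exponent `d i` that
is nonzero in `k`, specialize `X_y ↦ t_y T^[y = i]` with scalars `t` for which the
`T^(d i)`-coefficient survives. As `k` is infinite, the substitutions `T ↦ sT` separate the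
homogeneous components, which puts `ι i ^ (d i)` into `V`; then `T ↦ T + 1` puts `(d i) • ι i`,
hence `ι i` and all of `k⟨X⟩`, into `V`. Otherwise every exponent of `π v` is divisible by `p`,
so `π v` is a linear combination of `p`-th powers `π(a)^p = π(a^p)`, and the `a^p` lie in the
T-space generated by `ι x ^ p`.
-/

open Polynomial in
theorem Submodule.mem_of_forall_sum_pow_smul_mem {k M : Type*} [Field k] [Infinite k]
    [AddCommGroup M] [Module k M] (V : Submodule k M) {N : ℕ} (a : ℕ → M)
    (h : ∀ s : k, ∑ j ∈ Finset.range N, s ^ j • a j ∈ V) {n : ℕ} (hn : n < N) : a n ∈ V := by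
  rw [← Submodule.Quotient.mk_eq_zero, ← Module.forall_dual_apply_eq_zero_iff k]
  intro ℓ
  have hP : ∑ j ∈ Finset.range N, monomial j ((ℓ ∘ₗ V.mkQ) (a j)) = 0 :=
    Polynomial.funext fun s => by
      have hs := congr_arg ℓ ((Submodule.Quotient.mk_eq_zero V).2 (h s))
      rw [← Submodule.mkQ_apply, map_sum, map_sum] at hs
      simp only [eval_finsetSum, eval_monomial, eval_zero]
      simpa [mul_comm] using hs
  simpa [finsetSum_coeff, coeff_monomial, hn] using congr_arg (coeff · n) hP

namespace Polynomial

theorem comp_C_mul_X_eq_sum {R : Type*} [CommSemiring R] (q : R[X]) (s : R) :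
    q.comp (C s * X) = ∑ j ∈ Finset.range (q.natDegree + 1), s ^ j • monomial j (q.coeff j) := by
  ext n
  rcases lt_or_ge n (q.natDegree + 1) with hn | hn
  · simp [finsetSum_coeff, coeff_monomial, hn]
    ring
  · simp [finsetSum_coeff, coeff_monomial,
      coeff_eq_zero_of_natDegree_lt (by omega : q.natDegree < n)]

variable {k : Type*} [Field k] [Infinite k] {W : Submodule k k[X]}
  (hW : ∀ q ∈ W, ∀ r : k[X], q.comp r ∈ W)
include hW

theorem monomial_coeff_mem_of_comp_mem {q : k[X]} (hq : q ∈ W) (n : ℕ) :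
    monomial n (q.coeff n) ∈ W := by
  rcases lt_or_ge n (q.natDegree + 1) with hn | hn
  · exact W.mem_of_forall_sum_pow_smul_mem _ (fun s => comp_C_mul_X_eq_sum q s ▸ hW q hq _) hn
  · rw [coeff_eq_zero_of_natDegree_lt (by omega), map_zero]
    exact W.zero_mem

theorem X_mem_of_comp_mem {q : k[X]} (hq : q ∈ W) {n : ℕ} (hn : (n : k) ≠ 0)
    (hqn : q.coeff n ≠ 0) : X ∈ W := by
  have hXn : X ^ n ∈ W := by
    have := W.smul_mem (q.coeff n)⁻¹ (monomial_coeff_mem_of_comp_mem hW hq n)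
    rwa [smul_monomial, smul_eq_mul, inv_mul_cancel₀ hqn, monomial_one_right_eq_X_pow] at this
  have hnX := monomial_coeff_mem_of_comp_mem hW (hW _ hXn (X + 1)) 1
  rw [X_pow_comp, coeff_X_add_one_pow, Nat.choose_one_right] at hnX
  have := W.smul_mem (n : k)⁻¹ hnX
  rwa [smul_monomial, smul_eq_mul, inv_mul_cancel₀ hn, monomial_one_one_eq_X] at this

end Polynomial

namespace MvPolynomial

variable {R σ : Type*}

theorem aeval_C_mul_X_pow_monomial [CommSemiring R] (w : σ → ℕ) (t : σ → R) (d : σ →₀ ℕ)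
    (a : R) :
    aeval (fun y => Polynomial.C (t y) * Polynomial.X ^ w y) (monomial d a)
      = Polynomial.C (eval t (monomial d a)) * Polynomial.X ^ Finsupp.weight w d := by
  simp only [aeval_monomial, eval_monomial, mul_pow, Finsupp.weight_apply, Finsupp.prod,
    Finsupp.sum, Finset.prod_mul_distrib, ← pow_mul, ← Finset.prod_pow_eq_pow_sum, map_mul,
    map_prod, map_pow, Polynomial.algebraMap_eq, smul_eq_mul, mul_comm (w _)]
  ring

theorem coeff_aeval_C_mul_X_pow [CommSemiring R] (w : σ → ℕ) (t : σ → R)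
    (f : MvPolynomial σ R) (n : ℕ) :
    (aeval (fun y => Polynomial.C (t y) * Polynomial.X ^ w y) f).coeff n
      = eval t (weightedHomogeneousComponent w n f) := by
  induction f using MvPolynomial.induction_on' with
  | monomial d a =>
    have hd := isWeightedHomogeneous_monomial w d a rfl
    rw [aeval_C_mul_X_pow_monomial, Polynomial.coeff_C_mul_X_pow]
    split_ifs with h
    · rw [h, hd.weightedHomogeneousComponent_same]
    · rw [hd.weightedHomogeneousComponent_ne _ h, map_zero]
  | add f g hf hg => simp only [map_add, Polynomial.coeff_add, hf, hg]

theorem exists_coeff_aeval_C_mul_X_pow_ne_zero [CommRing R] [IsDomain R] [Infinite R]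
    (w : σ → ℕ) {f : MvPolynomial σ R} {d : σ →₀ ℕ} (hd : d ∈ f.support) :
    ∃ t : σ → R,
      (aeval (fun y => Polynomial.C (t y) * Polynomial.X ^ w y) f).coeff (Finsupp.weight w d)
        ≠ 0 := by
  classical
  have hG : weightedHomogeneousComponent w (Finsupp.weight w d) f ≠ 0 := fun h => by
    have := congr_arg (coeff d) h
    rw [coeff_weightedHomogeneousComponent, if_pos rfl, coeff_zero] at this
    exact mem_support_iff.1 hd this
  obtain ⟨t, ht⟩ : ∃ t, eval t (weightedHomogeneousComponent w (Finsupp.weight w d) f) ≠ 0 := by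
    by_contra! h
    exact hG (MvPolynomial.funext fun t => by simpa using h t)
  exact ⟨t, by rwa [coeff_aeval_C_mul_X_pow]⟩

theorem mem_span_pow_of_dvd [CommSemiring R] {p : ℕ} {f : MvPolynomial σ R}
    (h : ∀ d ∈ f.support, ∀ i, p ∣ d i) :
    f ∈ Submodule.span R (Set.range fun g : MvPolynomial σ R => g ^ p) := by
  rw [← support_sum_monomial_coeff f]
  refine Submodule.sum_mem _ fun d hd => ?_
  obtain ⟨e, rfl⟩ : ∃ e, d = p • e :=
    ⟨d.mapRange (· / p) (Nat.zero_div p), by ext i; simp [Nat.mul_div_cancel' (h d hd i)]⟩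
  rw [← mul_one (coeff _ f), ← smul_eq_mul, ← smul_monomial, ← one_pow p, ← monomial_pow]
  exact Submodule.smul_mem _ _ (Submodule.subset_span ⟨_, rfl⟩)

end MvPolynomial

namespace FreeAlgebra

variable (k X : Type*) [CommRing k]

noncomputable abbrev toMvPolynomial : FreeAlgebra k X →ₐ[k] MvPolynomial X k :=
  lift k MvPolynomial.X

theorem toMvPolynomial_surjective : Function.Surjective (toMvPolynomial k X) :=
  (AlgHom.range_eq_top _).1 <| eq_top_iff.2 <| MvPolynomial.adjoin_range_X (R := k) ▸
    Algebra.adjoin_le (Set.range_subset_iff.2 fun y => ⟨ι k y, by simp⟩)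

variable {k X}

theorem mem_of_toMvPolynomial_eq_zero (I : Submodule k (FreeAlgebra k X))
    (hI : ∀ a ∈ I, ∀ r : FreeAlgebra k X, r * a ∈ I ∧ a * r ∈ I)
    (hcomm : ∀ a b : FreeAlgebra k X, a * b - b * a ∈ I) {a : FreeAlgebra k X}
    (ha : toMvPolynomial k X a = 0) : a ∈ I := by
  let J : TwoSidedIdeal (FreeAlgebra k X) := .mk' I I.zero_mem I.add_mem I.neg_mem
    (fun h => (hI _ h _).1) (fun h => (hI _ h _).2)
  have hJ (a b : FreeAlgebra k X) : J.ringCon a b ↔ a - b ∈ I := by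
    rw [TwoSidedIdeal.rel_iff, TwoSidedIdeal.mem_mk']
    rfl
  -- `k⟨X⟩ ⧸ I` is commutative, so the quotient map factors through `k[X]`
  let _ : CommRing J.ringCon.Quotient :=
    { (inferInstance : Ring J.ringCon.Quotient) with
      mul_comm := by
        rintro ⟨a⟩ ⟨b⟩
        exact (RingCon.eq _).2 ((hJ _ _).2 (hcomm _ _)) }
  have hfac : (MvPolynomial.aeval fun y => J.ringCon.mkₐ k (ι k y)).comp (toMvPolynomial k X)
      = J.ringCon.mkₐ k := by
    ext y
    simp
  have : J.ringCon.mkₐ k a = J.ringCon.mkₐ k 0 := by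
    rw [← hfac, AlgHom.comp_apply, ha, map_zero, map_zero]
  simpa using (hJ a 0).1 ((RingCon.eq _).1 this)

end FreeAlgebra

open FreeAlgebra

namespace IsTSpaceF

variable {k X : Type*} [Field k] {V : Submodule k (FreeAlgebra k X)}

theorem eq_top_of_ι_mem (hV : IsTSpaceF k X V) {i : X} (hi : ι k i ∈ V) : V = ⊤ :=
  Submodule.eq_top_iff'.2 fun a => by simpa using hV (lift k fun _ => a) _ hi

theorem eq_top_of_mem_support [Infinite k] (hV : IsTSpaceF k X V) {v : FreeAlgebra k X}
    (hv : v ∈ V) {d : X →₀ ℕ} (hd : d ∈ (toMvPolynomial k X v).support) {i : X}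
    (hi : (d i : k) ≠ 0) : V = ⊤ := by
  classical
  let W := V.comap (Polynomial.aeval (ι k i)).toLinearMap
  have hW : ∀ q ∈ W, ∀ r, q.comp r ∈ W := fun q hq r => by
    have := hV ((Polynomial.aeval (ι k i)).comp
      ((Polynomial.aeval r).comp (lift k fun _ => Polynomial.X))) _ hq
    simpa [W, Polynomial.comp_eq_aeval, ← Polynomial.aeval_algHom_apply] using this
  obtain ⟨t, ht⟩ := MvPolynomial.exists_coeff_aeval_C_mul_X_pow_ne_zero (Pi.single i 1) hd
  rw [Finsupp.weight_single_one_apply] at ht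
  have hvW := hV (((Polynomial.aeval (ι k i)).comp (MvPolynomial.aeval fun y =>
    Polynomial.C (t y) * Polynomial.X ^ (Pi.single i 1 : X → ℕ) y)).comp (toMvPolynomial k X)) v hv
  have hX := Polynomial.X_mem_of_comp_mem hW hvW hi ht
  exact hV.eq_top_of_ι_mem (by simpa [W] using hX)

end IsTSpaceF

theorem pow_mem_TSpaceGenF {k X : Type*} [Field k] (x : X) (n : ℕ) (g : FreeAlgebra k X) :
    g ^ n ∈ TSpaceGenF k X {ι k x ^ n} :=
  Submodule.mem_sInf.2 fun _ hW => by simpa using hW.1 (lift k fun _ => g) _ (hW.2 rfl)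

theorem proper_TSpaceF_le_Y_general (k : Type*) [Field k] [Infinite k]
    (X : Type*) (x : X) :
    ∀ V : Submodule k (FreeAlgebra k X), IsTSpaceF k X V → V ≠ ⊤ →
      V ≤ T2 k X ⊔ TSpaceGenF k X
        {if ringChar k = 0 then 1 else (FreeAlgebra.ι k x) ^ (ringChar k)} := by
  intro V hV hVne v hv
  set p := ringChar k
  have hc : (if p = 0 then 1 else ι k x ^ p) = ι k x ^ p := by split_ifs with h <;> simp [h]
  rw [hc]
  have hdvd : ∀ d ∈ (toMvPolynomial k X v).support, ∀ i, p ∣ d i := fun d hd i => by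
    by_contra h
    exact hVne (hV.eq_top_of_mem_support hv hd ((ringChar.spec k _).not.2 h))
  obtain ⟨w, hw, hwv⟩ : toMvPolynomial k X v ∈
      (TSpaceGenF k X {ι k x ^ p}).map (toMvPolynomial k X).toLinearMap := by
    refine Submodule.span_le.2 (Set.range_subset_iff.2 fun g => ?_)
      (MvPolynomial.mem_span_pow_of_dvd hdvd)
    obtain ⟨a, rfl⟩ := toMvPolynomial_surjective k X g
    exact ⟨a ^ p, pow_mem_TSpaceGenF x p a, map_pow (toMvPolynomial k X) a p⟩
  rw [← sub_add_cancel v w]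
  refine Submodule.add_mem_sup (Submodule.mem_sInf.2 fun I hI => ?_) hw
  exact mem_of_toMvPolynomial_eq_zero I hI.1.2 hI.2 (by simp [← hwv])

/-- For an infinite field `k`, every proper T-space of `k⟨X⟩` is contained in
`Y = T⁽²⁾ + {c}ˢ`, where `c = ι(x)^p` if `char k = p > 0` and `c = 1` if `char k = 0`. -/
theorem proper_TSpaceF_le_Y (k : Type*) [Field k] [Infinite k]
    (X : Type*) [Nonempty X] (x : X) :
    ∀ V : Submodule k (FreeAlgebra k X), IsTSpaceF k X V → V ≠ ⊤ →
      V ≤ T2 k X ⊔ TSpaceGenF k X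
        {if ringChar k = 0 then 1 else (FreeAlgebra.ι k x) ^ (ringChar k)} :=
  proper_TSpaceF_le_Y_general k X x
end

section
/- Let k be a finite field with q elements and characteristic p > 2, let X be a nonempty type, and fix x ∈ X. For each n ≥ 0 let Ṽ_n = T^{(2)} + S_n, where S_n is the T-space of k⟨X⟩ generated by ι(x) + ι(x)^(q^(2^n)). Then for all nonnegative integers m, n with m ≠ n, Ṽ_m + Ṽ_n = k⟨X⟩. -/
/-- Substitution instances of the generator lie in the generated T-space. -/
lemma gen_mem (k X : Type*) [Field k] (x : X) (N : ℕ) (w : FreeAlgebra k X) :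
    w + w ^ N ∈ TSpaceGenF k X {FreeAlgebra.ι k x + (FreeAlgebra.ι k x) ^ N} := by
  rw [TSpaceGenF, Submodule.mem_sInf]
  rintro V ⟨hT, hS⟩
  have hf : FreeAlgebra.ι k x + (FreeAlgebra.ι k x) ^ N ∈ V :=
    hS (Set.mem_singleton _)
  have := hT (FreeAlgebra.lift k (fun _ => w)) _ hf
  simpa using this

/-- Telescoping sum. -/
lemma telescope {k A : Type*} [Field k] [AddCommGroup A] [Module k A]
    (v : ℕ → A) (r : ℕ) :
    ∑ t ∈ Finset.range r, (-1 : k) ^ t • (v t + v (t + 1))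
      = v 0 - (-1 : k) ^ r • v r := by
  induction r with
  | zero => simp
  | succ r ih =>
    rw [Finset.sum_range_succ, ih, pow_succ, smul_add, mul_neg_one, neg_smul]
    abel

lemma key (k : Type*) [Field k] (p : ℕ)
    (hp : ringChar k = p) (hp2 : 2 < p)
    (X : Type*) (x : X) (q m n : ℕ) (hmn : m < n) :
    (T2 k X ⊔ TSpaceGenF k X
        {FreeAlgebra.ι k x + (FreeAlgebra.ι k x) ^ (q ^ (2 ^ m))}) ⊔
      (T2 k X ⊔ TSpaceGenF k X
        {FreeAlgebra.ι k x + (FreeAlgebra.ι k x) ^ (q ^ (2 ^ n))}) = ⊤ := by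
  have h2 : (2 : k) ≠ 0 := by
    intro h
    have : ringChar k ∣ 2 := by
      have := (CharP.cast_eq_zero_iff k (ringChar k) 2).1 (by exact_mod_cast h)
      exact this
    rw [hp] at this
    exact absurd (Nat.le_of_dvd (by norm_num) this) (by omega)
  set Na : ℕ := q ^ (2 ^ m) with hNa
  set Nb : ℕ := q ^ (2 ^ n) with hNb
  set Sm := TSpaceGenF k X {FreeAlgebra.ι k x + (FreeAlgebra.ι k x) ^ Na} with hSm
  set Sn := TSpaceGenF k X {FreeAlgebra.ι k x + (FreeAlgebra.ι k x) ^ Nb} with hSn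
  rw [eq_top_iff]
  intro u _
  set r : ℕ := 2 ^ (n - m) - 1 with hr
  have hr1 : r + 1 = 2 ^ (n - m) := by
    have : 1 ≤ 2 ^ (n - m) := Nat.one_le_two_pow
    omega
  have hrodd : Odd r := by
    have heven : Even (2 ^ (n - m)) := by
      refine (Nat.even_pow).2 ⟨even_two, ?_⟩
      omega
    exact Nat.Even.sub_odd Nat.one_le_two_pow heven odd_one
  set v : ℕ → FreeAlgebra k X := fun t => u ^ (q ^ (2 ^ m * (t + 1))) with hv
  have hvpow : ∀ t, v t ^ Na = v (t + 1) := by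
    intro t
    have h' : 2 ^ m * (t + 1) + 2 ^ m = 2 ^ m * (t + 1 + 1) := by ring
    simp only [hv, hNa, ← pow_mul, ← pow_add, h']
  have hv0 : v 0 = u ^ Na := by simp [hv, hNa]
  have hvr : v r = u ^ Nb := by
    have h' : 2 ^ m * (r + 1) = 2 ^ n := by
      rw [hr1, ← pow_add]
      congr 1
      omega
    simp only [hv, hNb, h']
  -- the telescoping sum identity
  have hsum : ∑ t ∈ Finset.range r, (-1 : k) ^ t • (v t + v t ^ Na)
      = u ^ Na + u ^ Nb := by
    calc ∑ t ∈ Finset.range r, (-1 : k) ^ t • (v t + v t ^ Na)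
        = ∑ t ∈ Finset.range r, (-1 : k) ^ t • (v t + v (t + 1)) := by simp_rw [hvpow]
      _ = v 0 - (-1 : k) ^ r • v r := telescope v r
      _ = u ^ Na + u ^ Nb := by
          rw [hrodd.neg_one_pow, hv0, hvr, neg_smul, one_smul, sub_neg_eq_add]
  -- the main algebraic identity
  have hid : u = (2 : k)⁻¹ •
      ((u + u ^ Na) + (u + u ^ Nb)
        - ∑ t ∈ Finset.range r, (-1 : k) ^ t • (v t + v t ^ Na)) := by
    rw [hsum]
    have : (u + u ^ Na) + (u + u ^ Nb) - (u ^ Na + u ^ Nb) = (2 : k) • u := by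
      rw [two_smul]; abel
    rw [this, smul_smul, inv_mul_cancel₀ h2, one_smul]
  -- memberships
  set M := (T2 k X ⊔ Sm) ⊔ (T2 k X ⊔ Sn) with hM
  have hSmM : Sm ≤ M := le_trans le_sup_right le_sup_left
  have hSnM : Sn ≤ M := le_trans le_sup_right le_sup_right
  have h1 : u + u ^ Na ∈ M := hSmM (gen_mem k X x Na u)
  have h2' : u + u ^ Nb ∈ M := hSnM (gen_mem k X x Nb u)
  have h3 : ∑ t ∈ Finset.range r, (-1 : k) ^ t • (v t + v t ^ Na) ∈ M := by
    refine Submodule.sum_mem M fun t _ => Submodule.smul_mem M _ ?_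
    exact hSmM (gen_mem k X x Na (v t))
  rw [hid]
  exact Submodule.smul_mem M _ (Submodule.sub_mem M (Submodule.add_mem M h1 h2') h3)

/-- For a finite field `k` with `q` elements and characteristic `p > 2`, with
`Ṽₙ = T⁽²⁾ + {ι(x) + ι(x)^(q^(2^n))}ˢ`, one has `Ṽₘ + Ṽₙ = k⟨X⟩` for `m ≠ n`. -/
theorem Vtilde_sup_eq_top (k : Type*) [Field k] [Fintype k] (q p : ℕ)
    (hq : Fintype.card k = q) (hp : ringChar k = p) (hp2 : 2 < p)
    (X : Type*) [Nonempty X] (x : X) (m n : ℕ) (hmn : m ≠ n) :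
    (T2 k X ⊔ TSpaceGenF k X
        {FreeAlgebra.ι k x + (FreeAlgebra.ι k x) ^ (q ^ (2 ^ m))}) ⊔
      (T2 k X ⊔ TSpaceGenF k X
        {FreeAlgebra.ι k x + (FreeAlgebra.ι k x) ^ (q ^ (2 ^ n))}) = ⊤ := by
  rcases lt_or_gt_of_ne hmn with h | h
  · exact key k p hp hp2 X x q m n h
  · rw [sup_comm]
    exact key k p hp hp2 X x q n m h
end

section
/- Let k be a finite field of characteristic p > 2 and let X be a nonempty type. Then k⟨X⟩ has infinitely many maximal T-spaces; that is, the set of maximal T-spaces of k⟨X⟩ is infinite. -/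
/-! Let `q = #k` and `Vₙ = {v ∈ k[x] : v ^ q ≡ v mod x ^ (q ^ n) - x}`. Each `Vₙ` is a subspace
closed under substitution `v ↦ v ∘ g`, and for `n > 1` it misses `x`, because `x ^ q - x` has
smaller degree than `x ^ (q ^ n) - x`. Since Frobenius has order dividing `n` on
`k[x] ⧸ (x ^ (q ^ n) - x)`, coprime `m, n` give `x ^ q - x ∈ (x ^ (q ^ m) - x, x ^ (q ^ n) - x)`;
together with the normalized trace `σₘ = m⁻¹ ∑_{i<m} x ^ (q ^ i) ∈ Vₘ`, which is `≡ x` mod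
`x ^ q - x`, this puts `x` in `Vₘ + Vₙ` whenever `m ≠ 0` in `k`.

Substituting elements of `k⟨X⟩` into `Vₙ` spans a T-space that does not contain a variable (send
every variable to `x` to land back in `Vₙ`), hence lies in a maximal T-space `Mₙ` by Zorn's lemma.
For distinct primes `m, n` different from the characteristic the T-spaces of `Vₘ` and `Vₙ` sum to
all of `k⟨X⟩`, so `Mₘ ≠ Mₙ`. -/

open Polynomial FiniteField

section FrobeniusFixed

variable {k : Type*} [Field k] [Fintype k]

theorem frobeniusAlgHom_pow_apply {R : Type*} [CommRing R] [Algebra k R] (n : ℕ) (a : R) :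
    (frobeniusAlgHom k R ^ n) a = a ^ Fintype.card k ^ n := by
  rw [AlgHom.coe_pow, coe_frobeniusAlgHom, pow_iterate]

theorem frobeniusAlgHom_pow_eq_one_iff {J : Ideal k[X]} {n : ℕ} :
    frobeniusAlgHom k (k[X] ⧸ J) ^ n = 1 ↔ X ^ Fintype.card k ^ n - X ∈ J := by
  rw [← Ideal.Quotient.eq, map_pow, ← frobeniusAlgHom_pow_apply]
  refine ⟨fun h => by rw [h, AlgHom.one_apply], fun h => ?_⟩
  exact Ideal.Quotient.algHom_ext k (Polynomial.algHom_ext (by simpa using h))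

theorem X_pow_card_pow_sub_X_dvd_pow_sub_self (n : ℕ) (g : k[X]) :
    X ^ Fintype.card k ^ n - X ∣ g ^ Fintype.card k ^ n - g := by
  have h := frobeniusAlgHom_pow_eq_one_iff.mpr (Ideal.mem_span_singleton_self
    (X ^ Fintype.card k ^ n - X : k[X]))
  rw [← Ideal.mem_span_singleton, ← Ideal.Quotient.eq, map_pow,
    ← frobeniusAlgHom_pow_apply n (Ideal.Quotient.mk _ g), h, AlgHom.one_apply]

theorem X_pow_card_pow_sub_X_dvd_of_dvd {m n : ℕ} (h : n ∣ m) :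
    (X ^ Fintype.card k ^ n - X : k[X]) ∣ X ^ Fintype.card k ^ m - X := by
  obtain ⟨j, rfl⟩ := h
  rw [← Ideal.mem_span_singleton, ← frobeniusAlgHom_pow_eq_one_iff, pow_mul,
    frobeniusAlgHom_pow_eq_one_iff.mpr (Ideal.mem_span_singleton_self _), one_pow]

theorem X_pow_card_pow_gcd_sub_X_mem {J : Ideal k[X]} {m n : ℕ}
    (hm : X ^ Fintype.card k ^ m - X ∈ J) (hn : X ^ Fintype.card k ^ n - X ∈ J) :
    X ^ Fintype.card k ^ m.gcd n - X ∈ J :=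
  frobeniusAlgHom_pow_eq_one_iff.mp <| pow_gcd_eq_one.mpr
    ⟨frobeniusAlgHom_pow_eq_one_iff.mpr hm, frobeniusAlgHom_pow_eq_one_iff.mpr hn⟩

variable (k) in
noncomputable def frobeniusFixedMod (n : ℕ) : Submodule k k[X] :=
  ((Ideal.span {X ^ Fintype.card k ^ n - X}).restrictScalars k).comap
    ((frobeniusAlgHom k k[X]).toLinearMap - LinearMap.id)

theorem mem_frobeniusFixedMod {n : ℕ} {v : k[X]} :
    v ∈ frobeniusFixedMod k n ↔ X ^ Fintype.card k ^ n - X ∣ v ^ Fintype.card k - v := by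
  simp [frobeniusFixedMod, Ideal.mem_span_singleton]

theorem mem_frobeniusFixedMod_of_dvd {n : ℕ} {v : k[X]} (h : X ^ Fintype.card k ^ n - X ∣ v) :
    v ∈ frobeniusFixedMod k n :=
  mem_frobeniusFixedMod.mpr (dvd_sub (dvd_pow h Fintype.card_ne_zero) h)

theorem comp_mem_frobeniusFixedMod {n : ℕ} {v : k[X]} (hv : v ∈ frobeniusFixedMod k n)
    (g : k[X]) : v.comp g ∈ frobeniusFixedMod k n := by
  obtain ⟨h, hh⟩ := mem_frobeniusFixedMod.mp hv
  have hcomp : (v.comp g) ^ Fintype.card k - v.comp g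
      = (g ^ Fintype.card k ^ n - g) * h.comp g := by
    rw [← pow_comp, ← sub_comp, hh, mul_comp, sub_comp, X_pow_comp, X_comp]
  rw [mem_frobeniusFixedMod, hcomp]
  exact dvd_mul_of_dvd_left (X_pow_card_pow_sub_X_dvd_pow_sub_self n g) _

theorem X_notMem_frobeniusFixedMod {n : ℕ} (hn : 1 < n) : X ∉ frobeniusFixedMod k n := by
  intro hX
  have hq := Fintype.one_lt_card (α := k)
  have hdeg := natDegree_le_of_dvd (mem_frobeniusFixedMod.mp hX) (X_pow_card_sub_X_ne_zero k hq)
  rw [X_pow_card_pow_sub_X_natDegree_eq k (by omega) hq, X_pow_card_sub_X_natDegree_eq k hq] at hdeg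
  exact (Nat.pow_lt_pow_right hq hn).not_ge (by simpa using hdeg)

variable (k) in
noncomputable def normalizedTrace (n : ℕ) : k[X] :=
  (n : k)⁻¹ • ∑ i ∈ Finset.range n, X ^ Fintype.card k ^ i

theorem normalizedTrace_mem (n : ℕ) : normalizedTrace k n ∈ frobeniusFixedMod k n := by
  have hfrob : normalizedTrace k n ^ Fintype.card k - normalizedTrace k n
      = (n : k)⁻¹ • (X ^ Fintype.card k ^ n - X) := by
    rw [← frobeniusAlgHom_apply k, normalizedTrace, map_smul, map_sum, ← smul_sub,
      ← Finset.sum_sub_distrib]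
    simp only [frobeniusAlgHom_apply, ← pow_mul, ← pow_succ]
    rw [Finset.sum_range_sub (fun i => (X : k[X]) ^ Fintype.card k ^ i), pow_zero, pow_one]
  rw [mem_frobeniusFixedMod, hfrob, smul_eq_C_mul]
  exact dvd_mul_left _ _

theorem X_pow_card_sub_X_dvd_normalizedTrace_sub_X {n : ℕ} (hn : (n : k) ≠ 0) :
    X ^ Fintype.card k - X ∣ normalizedTrace k n - X := by
  have hsum : normalizedTrace k n - X
      = (n : k)⁻¹ • ∑ i ∈ Finset.range n, (X ^ Fintype.card k ^ i - X : k[X]) := by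
    rw [Finset.sum_sub_distrib, Finset.sum_const, Finset.card_range, smul_sub,
      ← Nat.cast_smul_eq_nsmul k, smul_smul, inv_mul_cancel₀ hn, one_smul, normalizedTrace]
  rw [hsum, smul_eq_C_mul]
  refine dvd_mul_of_dvd_right (Finset.dvd_sum fun i _ => ?_) _
  simpa using X_pow_card_pow_sub_X_dvd_of_dvd (k := k) (one_dvd i)

theorem X_mem_frobeniusFixedMod_sup {m n : ℕ} (hmn : m.Coprime n) (hm : (m : k) ≠ 0) :
    X ∈ frobeniusFixedMod k m ⊔ frobeniusFixedMod k n := by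
  have hw : X ^ Fintype.card k ^ m.gcd n - X ∈
      Ideal.span {X ^ Fintype.card k ^ m - X, (X ^ Fintype.card k ^ n - X : k[X])} :=
    X_pow_card_pow_gcd_sub_X_mem (Ideal.subset_span (Set.mem_insert _ _))
      (Ideal.subset_span (Set.mem_insert_of_mem _ rfl))
  rw [hmn.gcd_eq_one, pow_one] at hw
  obtain ⟨a, b, hab⟩ := Ideal.mem_span_pair.mp hw
  obtain ⟨c, hc⟩ := X_pow_card_sub_X_dvd_normalizedTrace_sub_X hm
  refine Submodule.mem_sup.mpr ⟨normalizedTrace k m - c * a * (X ^ Fintype.card k ^ m - X),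
    sub_mem (normalizedTrace_mem m) (mem_frobeniusFixedMod_of_dvd (dvd_mul_left _ _)),
    -(c * b * (X ^ Fintype.card k ^ n - X)),
    neg_mem (mem_frobeniusFixedMod_of_dvd (dvd_mul_left _ _)), ?_⟩
  linear_combination hc - c * hab

end FrobeniusFixed

section TSpace

variable {k Y : Type*} [Field k]

theorem IsTSpaceF.eq_top_of_ι_mem_s17 {U : Submodule k (FreeAlgebra k Y)} (hU : IsTSpaceF k Y U)
    {y : Y} (hy : FreeAlgebra.ι k y ∈ U) : U = ⊤ :=
  eq_top_iff.mpr fun z _ => by simpa using hU (FreeAlgebra.lift k fun _ => z) _ hy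

theorem isTSpaceF_sSup {c : Set (Submodule k (FreeAlgebra k Y))}
    (hc : ∀ V ∈ c, IsTSpaceF k Y V) : IsTSpaceF k Y (sSup c) := fun φ =>
  show sSup c ≤ (sSup c).comap φ.toLinearMap from
    sSup_le fun V hV =>
      le_trans (show V ≤ V.comap φ.toLinearMap from hc V hV φ) (Submodule.comap_mono (le_sSup hV))

variable (k Y) in
def IsMaximalTSpaceF (V : Submodule k (FreeAlgebra k Y)) : Prop :=
  IsTSpaceF k Y V ∧ V ≠ ⊤ ∧
    ∀ U : Submodule k (FreeAlgebra k Y), IsTSpaceF k Y U → V ≤ U → U ≠ ⊤ → U = V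

theorem exists_isMaximalTSpaceF_le {V : Submodule k (FreeAlgebra k Y)} (hV : IsTSpaceF k Y V)
    {y : Y} (hy : FreeAlgebra.ι k y ∉ V) : ∃ M, IsMaximalTSpaceF k Y M ∧ V ≤ M := by
  have hchain : ∀ c ⊆ {U | IsTSpaceF k Y U ∧ FreeAlgebra.ι k y ∉ U}, IsChain (· ≤ ·) c →
      ∀ U ∈ c, ∃ ub ∈ {U | IsTSpaceF k Y U ∧ FreeAlgebra.ι k y ∉ U}, ∀ W ∈ c, W ≤ ub := by
    intro c hc hchain U hU
    refine ⟨sSup c, ⟨isTSpaceF_sSup fun W hW => (hc hW).1, fun hy => ?_⟩, fun W => le_sSup⟩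
    obtain ⟨W, hW, hyW⟩ := (Submodule.mem_sSup_of_directed ⟨U, hU⟩ hchain.directedOn).mp hy
    exact (hc hW).2 hyW
  obtain ⟨M, hVM, ⟨hM, hyM⟩, hmax⟩ := zorn_le_nonempty₀ _ hchain V ⟨hV, hy⟩
  refine ⟨M, ⟨hM, fun htop => hyM (htop ▸ trivial), fun U hU hMU hUtop => ?_⟩, hVM⟩
  exact le_antisymm (hmax ⟨hU, fun hyU => hUtop (hU.eq_top_of_ι_mem_s17 hyU)⟩ hMU) hMU

variable (Y) in
noncomputable def evalSpan (V : Submodule k k[X]) : Submodule k (FreeAlgebra k Y) :=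
  Submodule.span k {z | ∃ v ∈ V, ∃ G : FreeAlgebra k Y, aeval G v = z}

theorem isTSpaceF_evalSpan (V : Submodule k k[X]) : IsTSpaceF k Y (evalSpan Y V) := fun φ =>
  show evalSpan Y V ≤ (evalSpan Y V).comap φ.toLinearMap from
    Submodule.span_le.mpr fun _ ⟨v, hv, G, hz⟩ =>
      Submodule.subset_span ⟨v, hv, φ G, by rw [← hz, aeval_algHom_apply]; rfl⟩

theorem lift_X_mem_of_mem_evalSpan {V : Submodule k k[X]} (hV : ∀ v ∈ V, ∀ g, v.comp g ∈ V)
    {z : FreeAlgebra k Y} (hz : z ∈ evalSpan Y V) : FreeAlgebra.lift k (fun _ => X) z ∈ V := by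
  refine (Submodule.span_le (p := V.comap (FreeAlgebra.lift k fun _ : Y => X).toLinearMap)).mpr
    ?_ hz
  rintro _ ⟨v, hv, G, rfl⟩
  simpa [← aeval_algHom_apply, ← comp_eq_aeval] using hV v hv _

theorem ι_notMem_evalSpan {V : Submodule k k[X]} (hV : ∀ v ∈ V, ∀ g, v.comp g ∈ V) (hX : X ∉ V)
    (y : Y) : FreeAlgebra.ι k y ∉ evalSpan Y V := fun hy =>
  hX (by simpa using lift_X_mem_of_mem_evalSpan hV hy)

theorem evalSpan_sup_eq_top {V W : Submodule k k[X]} (h : X ∈ V ⊔ W) :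
    evalSpan Y V ⊔ evalSpan Y W = ⊤ := by
  refine eq_top_iff.mpr fun z _ => ?_
  obtain ⟨v, hv, w, hw, hvw⟩ := Submodule.mem_sup.mp h
  have hz : aeval z v + aeval z w = z := by rw [← map_add, hvw, aeval_X]
  exact hz ▸ Submodule.add_mem_sup (Submodule.subset_span ⟨v, hv, z, rfl⟩)
    (Submodule.subset_span ⟨w, hw, z, rfl⟩)

end TSpace

theorem infinitely_many_maximal_TSpacesF_odd_general (k : Type*) [Field k] [Fintype k]
    (X : Type*) [Nonempty X] :
    {V : Submodule k (FreeAlgebra k X) | IsTSpaceF k X V ∧ V ≠ ⊤ ∧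
      ∀ U : Submodule k (FreeAlgebra k X), IsTSpaceF k X U → V ≤ U → U ≠ ⊤ →
        U = V}.Infinite := by
  change {V | IsMaximalTSpaceF k X V}.Infinite
  obtain ⟨y⟩ := ‹Nonempty X›
  let P := {n : ℕ | n.Prime} \ {ringChar k}
  have : Infinite P := (Nat.infinite_setOfPred_prime.sdiff (Set.finite_singleton _)).to_subtype
  have hexists (n : P) : ∃ M, IsMaximalTSpaceF k X M ∧ evalSpan X (frobeniusFixedMod k n) ≤ M :=
    exists_isMaximalTSpaceF_le (isTSpaceF_evalSpan _) (ι_notMem_evalSpan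
      (fun _ => comp_mem_frobeniusFixedMod) (X_notMem_frobeniusFixedMod n.2.1.one_lt) y)
  choose M hM hVM using hexists
  refine Set.infinite_of_injective_forall_mem (fun m n hmn => ?_) hM
  by_contra hne
  have hcop : (m : ℕ).Coprime n :=
    (Nat.coprime_primes m.2.1 n.2.1).mpr (Subtype.coe_ne_coe.mpr hne)
  have hm : ((m : ℕ) : k) ≠ 0 := CharP.cast_ne_zero_of_ne_of_prime k m.2.1 (Ne.symm m.2.2)
  refine (hM m).2.1 (eq_top_iff.mpr ?_)
  rw [← evalSpan_sup_eq_top (X_mem_frobeniusFixedMod_sup hcop hm)]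
  exact sup_le (hVM m) (hmn ▸ hVM n)

/-- If `k` is a finite field of characteristic `p > 2` and `X` is nonempty, then `k⟨X⟩`
has infinitely many maximal T-spaces. -/
theorem infinitely_many_maximal_TSpacesF_odd (k : Type*) [Field k] [Fintype k] (p : ℕ)
    (hp : ringChar k = p) (hp2 : 2 < p) (X : Type*) [Nonempty X] :
    {V : Submodule k (FreeAlgebra k X) | IsTSpaceF k X V ∧ V ≠ ⊤ ∧
      ∀ U : Submodule k (FreeAlgebra k X), IsTSpaceF k X U → V ≤ U → U ≠ ⊤ →
        U = V}.Infinite :=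
  infinitely_many_maximal_TSpacesF_odd_general k X
end
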